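/- arXiv:2509.17555 — 2 statements merged into one kernel-verified Lean document; each statement's English description precedes it below -/
import Mathlib

section
/- Let c be a capacity and φ^G a concave G-random distortion function (t ↦ φ^G(ω,t) concave for each ω). Then for all bounded measurable X and all ω ∈ Ω, E_{φ^G∘c}(X)(ω) = φ^G(ω, 0+) · sup_{t<1} r⁺_X(t) + ∫₀¹ φ'(ω, 1−t) · r⁺_X(t) dt, where φ'(ω,·) is the right-hand derivative of t ↦ φ^G(ω,t) on (0,1) and φ^G(ω,0+) its right limit at 0. -/
open MeasureTheory Set Filter Topology

def Comonotone {Ω : Type*} (X Y : Ω → ℝ) : Prop :=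
  ∀ ω ω' : Ω, 0 ≤ (X ω - X ω') * (Y ω - Y ω')

def BddMeas {Ω : Type*} [MeasurableSpace Ω] (X : Ω → ℝ) : Prop :=
  Measurable X ∧ ∃ M : ℝ, ∀ ω, |X ω| ≤ M

def IsCapacity {Ω : Type*} (c : Set Ω → ℝ) : Prop :=
  c ∅ = 0 ∧ c Set.univ = 1 ∧ ∀ A B : Set Ω, A ⊆ B → c A ≤ c B

def ContFromBelow {Ω : Type*} [MeasurableSpace Ω] (c : Set Ω → ℝ) : Prop :=
  ∀ A : ℕ → Set Ω, (∀ n, MeasurableSet (A n)) → Monotone A →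
    Filter.Tendsto (fun n => c (A n)) Filter.atTop (nhds (c (⋃ n, A n)))

noncomputable def distFun {Ω : Type*} (c : Set Ω → ℝ) (X : Ω → ℝ) (x : ℝ) : ℝ :=
  1 - c {ω | X ω > x}

noncomputable def choquet {Ω : Type*} (c : Set Ω → ℝ) (X : Ω → ℝ) : ℝ :=
  (∫ x in Set.Ioi (0:ℝ), c {ω | X ω > x}) +
    ∫ x in Set.Iio (0:ℝ), (c {ω | X ω > x} - 1)

noncomputable def rdChoquet {Ω : Type*} (φ : Ω → ℝ → ℝ) (c : Set Ω → ℝ)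
    (X : Ω → ℝ) (ω : Ω) : ℝ :=
  (∫ x in Set.Ioi (0:ℝ), φ ω (c {ω' | X ω' > x})) +
    ∫ x in Set.Iio (0:ℝ), (φ ω (c {ω' | X ω' > x}) - 1)

def IsRandDistortion {Ω : Type*} (mG : MeasurableSpace Ω) (φ : Ω → ℝ → ℝ) : Prop :=
  (∀ ω, φ ω 0 = 0) ∧ (∀ ω, φ ω 1 = 1) ∧
  (∀ ω, MonotoneOn (φ ω) (Set.Icc (0:ℝ) 1)) ∧
  (∀ ω, ∀ t ∈ Set.Icc (0:ℝ) 1, φ ω t ∈ Set.Icc (0:ℝ) 1) ∧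
  (∀ t ∈ Set.Icc (0:ℝ) 1, Measurable[mG] fun ω => φ ω t)

noncomputable def rminusCore {Ω : Type*} (c : Set Ω → ℝ) (X : Ω → ℝ) (t : ℝ) : ℝ :=
  sSup {x : ℝ | distFun c X x < t}

noncomputable def rplusCore {Ω : Type*} (c : Set Ω → ℝ) (X : Ω → ℝ) (t : ℝ) : ℝ :=
  sSup {x : ℝ | distFun c X x ≤ t}

noncomputable def rminusInf {Ω : Type*} (c : Set Ω → ℝ) (X : Ω → ℝ) (t : ℝ) : ℝ :=
  sInf {x : ℝ | t ≤ distFun c X x}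

noncomputable def rminusE {Ω : Type*} (c : Set Ω → ℝ) (X : Ω → ℝ) (t : ℝ) : ℝ :=
  if t = 0 then ⨅ s : Set.Ioo (0:ℝ) 1, rplusCore c X s.1
  else if t = 1 then ⨆ s : Set.Ioo (0:ℝ) 1, rminusCore c X s.1
  else rminusCore c X t

noncomputable def rplusE {Ω : Type*} (c : Set Ω → ℝ) (X : Ω → ℝ) (t : ℝ) : ℝ :=
  if t = 0 then ⨅ s : Set.Ioo (0:ℝ) 1, rplusCore c X s.1
  else if t = 1 then ⨆ s : Set.Ioo (0:ℝ) 1, rminusCore c X s.1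
  else rplusCore c X t

def Rich {Ω : Type*} [MeasurableSpace Ω] (c : Set Ω → ℝ) : Prop :=
  ∃ Z : Ω → ℝ, Measurable Z ∧ Continuous (distFun c Z) ∧
    Filter.Tendsto (distFun c Z) Filter.atBot (nhds 0) ∧
    Filter.Tendsto (distFun c Z) Filter.atTop (nhds 1)

set_option maxHeartbeats 1000000
namespace Stmt17Aux
variable {ψ : ℝ → ℝ}
lemma secant_anti {ψ : ℝ → ℝ} (hconc : ConcaveOn ℝ (Icc (0:ℝ) 1) ψ) {a x y : ℝ}
    (ha : a ∈ Icc (0:ℝ) 1) (hx : x ∈ Icc (0:ℝ) 1) (hy : y ∈ Icc (0:ℝ) 1)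
    (hxa : x ≠ a) (hya : y ≠ a) (hxy : x ≤ y) :
    (ψ y - ψ a) / (y - a) ≤ (ψ x - ψ a) / (x - a) := by
  have h := hconc.neg.secant_mono ha hx hy hxa hya hxy
  simp only [Pi.neg_apply] at h
  have h1 : (-ψ x - -ψ a) / (x - a) = -((ψ x - ψ a)/(x-a)) := by ring
  have h2 : (-ψ y - -ψ a) / (y - a) = -((ψ y - ψ a)/(y-a)) := by ring
  rw [h1, h2] at h
  linarith

lemma hasRightDeriv {ψ : ℝ → ℝ} (hconc : ConcaveOn ℝ (Icc (0:ℝ) 1) ψ) {x : ℝ}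
    (hx : x ∈ Ioo (0:ℝ) 1) :
    HasDerivWithinAt ψ (derivWithin ψ (Ioi x) x) (Ioi x) x := by
  obtain ⟨hx0, hx1⟩ := hx
  have hxIcc : x ∈ Icc (0:ℝ) 1 := ⟨hx0.le, hx1.le⟩
  have hsub : Ioo x 1 ⊆ Icc (0:ℝ) 1 := fun z hz => ⟨(hx0.trans hz.1).le, hz.2.le⟩
  have hanti : AntitoneOn (slope ψ x) (Ioo x 1) := by
    intro y hy z hz hyz
    rw [slope_def_field, slope_def_field]
    exact secant_anti hconc hxIcc (hsub hy) (hsub hz) (ne_of_gt hy.1) (ne_of_gt hz.1) hyz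
  have hne : (Ioo x 1).Nonempty := ⟨(x+1)/2, by constructor <;> nlinarith⟩
  have hbdd : BddAbove (slope ψ x '' Ioo x 1) := by
    refine ⟨(ψ (x/2) - ψ x) / (x/2 - x), ?_⟩
    rintro _ ⟨y, hy, rfl⟩
    rw [slope_def_field]
    exact secant_anti hconc hxIcc ⟨by linarith, by linarith⟩ (hsub hy)
      (by intro h; linarith) (ne_of_gt hy.1) (by linarith [hy.1])
  have htend : Tendsto (slope ψ x) (𝓝[>] x) (𝓝 (sSup (slope ψ x '' Ioo x 1))) :=
    AntitoneOn.tendsto_nhdsWithin_Ioo_right hne hanti hbdd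
  have h' : HasDerivWithinAt ψ (sSup (slope ψ x '' Ioo x 1)) (Ioi x) x := by
    rw [hasDerivWithinAt_iff_tendsto_slope]
    simpa [Set.diff_singleton_eq_self (fun h => lt_irrefl x h : x ∉ Ioi x)] using htend
  rwa [h'.derivWithin (uniqueDiffWithinAt_Ioi x)]


lemma rightDeriv_nonneg (hconc : ConcaveOn ℝ (Icc (0:ℝ) 1) ψ)
    (hmono : MonotoneOn ψ (Icc (0:ℝ) 1)) {x : ℝ} (hx : x ∈ Ioo (0:ℝ) 1) :
    0 ≤ derivWithin ψ (Ioi x) x := by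
  obtain ⟨hx0, hx1⟩ := hx
  have hxIcc : x ∈ Icc (0:ℝ) 1 := ⟨hx0.le, hx1.le⟩
  have hyIcc : (x+1)/2 ∈ Icc (0:ℝ) 1 := ⟨by linarith, by linarith⟩
  have hlt : x < (x+1)/2 := by linarith
  have h := hconc.slope_le_of_hasDerivWithinAt_Ioi hxIcc hyIcc hlt
    (hasRightDeriv hconc ⟨hx0, hx1⟩)
  have h0 : 0 ≤ slope ψ x ((x+1)/2) := by
    rw [slope_def_field]
    apply div_nonneg _ (by linarith)
    have := hmono hxIcc hyIcc hlt.le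
    linarith
  linarith


lemma rightDeriv_anti (hconc : ConcaveOn ℝ (Icc (0:ℝ) 1) ψ) :
    AntitoneOn (fun x => derivWithin ψ (Ioi x) x) (Ioo (0:ℝ) 1) := by
  intro x hx y hy hxy
  rcases eq_or_lt_of_le hxy with rfl | hxy
  · exact le_refl _
  have hxIcc : x ∈ Icc (0:ℝ) 1 := ⟨hx.1.le, hx.2.le⟩
  have hyIcc : y ∈ Icc (0:ℝ) 1 := ⟨hy.1.le, hy.2.le⟩
  have h1 : slope ψ x y ≤ derivWithin ψ (Ioi x) x :=
    hconc.slope_le_of_hasDerivWithinAt_Ioi hxIcc hyIcc hxy (hasRightDeriv hconc hx)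
  have htendy : Tendsto (slope ψ y) (𝓝[>] y) (𝓝 (derivWithin ψ (Ioi y) y)) := by
    have := hasDerivWithinAt_iff_tendsto_slope.1 (hasRightDeriv hconc hy)
    simpa [Set.diff_singleton_eq_self (fun h => lt_irrefl y h : y ∉ Ioi y)] using this
  have h2 : derivWithin ψ (Ioi y) y ≤ slope ψ x y := by
    refine le_of_tendsto htendy ?_
    filter_upwards [Ioo_mem_nhdsGT hy.2] with z hz
    have : (ψ z - ψ y) / (z - y) ≤ (ψ x - ψ y) / (x - y) :=
      secant_anti hconc hyIcc hxIcc ⟨(hy.1.trans hz.1).le, hz.2.le⟩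
        (ne_of_lt hxy) (ne_of_gt hz.1) (hxy.le.trans hz.1.le)
    rw [slope_def_field]
    rw [slope_comm, slope_def_field]
    exact this
  exact h2.trans (h1)

lemma psi_left_tendsto (hconc : ConcaveOn ℝ (Icc (0:ℝ) 1) ψ)
    (hψ0 : ψ 0 = 0) (hψ1 : ψ 1 = 1)
    (hmem : ∀ t ∈ Icc (0:ℝ) 1, ψ t ∈ Icc (0:ℝ) 1)
    {u : ℝ} (hu : u ∈ Ioc (0:ℝ) 1) :
    Tendsto ψ (𝓝[<] u) (𝓝 (ψ u)) := by
  have hcont : ContinuousOn ψ (Ioo (0:ℝ) 1) := by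
    simpa [interior_Icc] using hconc.continuousOn_interior
  rcases lt_or_eq_of_le hu.2 with h | h
  · exact ((hcont.continuousAt (Ioo_mem_nhds hu.1 h)).tendsto).mono_left nhdsWithin_le_nhds
  · subst h
    rw [hψ1]
    have hlow : ∀ s ∈ Ioo (0:ℝ) 1, s ≤ ψ s := by
      intro s hs
      have h2 : (1 - s) • ψ 0 + s • ψ 1 ≤ ψ ((1 - s) • (0:ℝ) + s • 1) :=
        hconc.2 ⟨le_refl (0:ℝ), zero_le_one⟩ ⟨zero_le_one, le_refl (1:ℝ)⟩
          (by linarith [hs.2]) hs.1.le (by ring)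
      simp only [smul_eq_mul, mul_zero, mul_one, zero_add, hψ0, hψ1] at h2
      linarith
    refine tendsto_of_tendsto_of_tendsto_of_le_of_le'
      (tendsto_id.mono_left nhdsWithin_le_nhds) tendsto_const_nhds ?_ ?_
    · filter_upwards [Ioo_mem_nhdsLT zero_lt_one] with s hs
      exact hlow s hs
    · filter_upwards [Ioo_mem_nhdsLT zero_lt_one] with s hs
      exact (hmem s ⟨hs.1.le, hs.2.le⟩).2


lemma lintegral_rightDeriv (hconc : ConcaveOn ℝ (Icc (0:ℝ) 1) ψ)
    (hψ0 : ψ 0 = 0) (hψ1 : ψ 1 = 1) (hmono : MonotoneOn ψ (Icc (0:ℝ) 1))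
    (hmem : ∀ t ∈ Icc (0:ℝ) 1, ψ t ∈ Icc (0:ℝ) 1)
    {u : ℝ} (hu : u ∈ Ioc (0:ℝ) 1) :
    ∫⁻ s in Ioo (0:ℝ) u, ENNReal.ofReal (derivWithin ψ (Ioi s) s)
      = ENNReal.ofReal (ψ u - sInf (ψ '' Ioo (0:ℝ) 1)) := by
  obtain ⟨hu0, hu1⟩ := hu
  set D : ℝ → ℝ := fun s => derivWithin ψ (Ioi s) s with hDdef
  have hDmeas : Measurable D := measurable_derivWithin_Ioi ψ
  have hcont : ContinuousOn ψ (Ioo (0:ℝ) 1) := by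
    simpa [interior_Icc] using hconc.continuousOn_interior
  -- FTC on compact subintervals
  have ftc : ∀ v w : ℝ, 0 < v → v ≤ w → w < 1 →
      ∫⁻ s in Ioo v w, ENNReal.ofReal (D s) = ENNReal.ofReal (ψ w - ψ v) := by
    intro v w hv hvw hw
    have hIcc : Icc v w ⊆ Ioo (0:ℝ) 1 := fun z hz =>
      ⟨lt_of_lt_of_le hv hz.1, lt_of_le_of_lt hz.2 hw⟩
    have hDanti' : AntitoneOn D (uIcc v w) := by
      rw [uIcc_of_le hvw]; exact (rightDeriv_anti hconc).mono hIcc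
    have hint : IntervalIntegrable D volume v w := hDanti'.intervalIntegrable
    have heq : ∫ y in v..w, D y = ψ w - ψ v :=
      intervalIntegral.integral_eq_sub_of_hasDeriv_right_of_le hvw
        (hcont.mono hIcc) (fun x hx => hasRightDeriv hconc (hIcc (Ioo_subset_Icc_self hx)))
        hint
    have hio : IntegrableOn D (Ioo v w) := (hint.1).mono_set Ioo_subset_Ioc_self
    have hnn : 0 ≤ᵐ[volume.restrict (Ioo v w)] D :=
      (ae_restrict_iff' measurableSet_Ioo).2 (ae_of_all _ fun x hx =>
        rightDeriv_nonneg hconc hmono (hIcc (Ioo_subset_Icc_self hx)))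
    calc ∫⁻ s in Ioo v w, ENNReal.ofReal (D s)
        = ENNReal.ofReal (∫ s in Ioo v w, D s) :=
          (ofReal_integral_eq_lintegral_ofReal hio hnn).symm
      _ = ENNReal.ofReal (ψ w - ψ v) := by
          rw [← integral_Ioc_eq_integral_Ioo, ← intervalIntegral.integral_of_le hvw, heq]
  -- sequences
  set a : ℕ → ℝ := fun n => u / (n + 3) with hadef
  set b : ℕ → ℝ := fun n => u * (n + 2) / (n + 3) with hbdef
  have hn3 : ∀ n : ℕ, (0:ℝ) < n + 3 := fun n => by positivity
  have ha_pos : ∀ n, 0 < a n := fun n => by positivity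
  have hab : ∀ n, a n < b n := fun n => by
    rw [hadef, hbdef]
    rw [div_lt_div_iff₀ (hn3 n) (hn3 n)]
    nlinarith [mul_pos (mul_pos hu0 (hn3 n)) (show (0:ℝ) < n + 1 by positivity)]
  have hb_lt : ∀ n, b n < u := fun n => by
    rw [hbdef, div_lt_iff₀ (hn3 n)]
    nlinarith [hu0]
  have hb_pos : ∀ n, 0 < b n := fun n => (ha_pos n).trans (hab n)
  have hba : ∀ n, b n = u - a n := fun n => by
    rw [hadef, hbdef]; field_simp; ring
  have ha_anti : Antitone a := by
    intro n m hnm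
    have hc : (n:ℝ) ≤ m := Nat.cast_le.2 hnm
    rw [hadef]
    dsimp only
    gcongr
  have hb_mono : Monotone b := by
    intro n m hnm
    rw [hba n, hba m]
    linarith [ha_anti hnm]
  have hset_mono : Monotone (fun n => Ioo (a n) (b n)) := fun n m hnm =>
    Ioo_subset_Ioo (ha_anti hnm) (hb_mono hnm)
  have hunion : Ioo (0:ℝ) u = ⋃ n, Ioo (a n) (b n) := by
    ext x
    simp only [mem_iUnion, mem_Ioo]
    constructor
    · rintro ⟨hx0, hxu⟩
      obtain ⟨n, hn⟩ := exists_nat_gt (max (u / x) (u / (u - x)))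
      have h1 : u / x < n := (le_max_left _ _).trans_lt hn
      have h2 : u / (u - x) < n := (le_max_right _ _).trans_lt hn
      have h1' : u < x * n := by
        rwa [div_lt_iff₀ hx0, mul_comm] at h1
      have h2' : u < (u - x) * n := by
        rwa [div_lt_iff₀ (by linarith), mul_comm] at h2
      have hnn : (0:ℝ) ≤ n := Nat.cast_nonneg n
      refine ⟨n, ?_, ?_⟩
      · rw [hadef, div_lt_iff₀ (hn3 n)]; nlinarith
      · rw [hbdef, lt_div_iff₀ (hn3 n)]; nlinarith
    · rintro ⟨n, hn1, hn2⟩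
      exact ⟨(ha_pos n).trans hn1, hn2.trans (hb_lt n)⟩
  -- withDensity measure
  set μ := volume.withDensity (fun s => ENNReal.ofReal (D s)) with hμdef
  have hμap : ∀ s : Set ℝ, MeasurableSet s → μ s = ∫⁻ x in s, ENNReal.ofReal (D x) :=
    fun s hs => withDensity_apply _ hs
  have key : ∫⁻ s in Ioo (0:ℝ) u, ENNReal.ofReal (D s)
      = ⨆ n, ENNReal.ofReal (ψ (b n) - ψ (a n)) := by
    rw [← hμap _ measurableSet_Ioo, hunion,
      (hset_mono.directed_le).measure_iUnion]
    congr 1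
    ext n
    rw [hμap _ measurableSet_Ioo, ftc (a n) (b n) (ha_pos n) (hab n).le
      ((hb_lt n).trans_le hu1)]
  rw [key]
  -- limits
  set Linf := sInf (ψ '' Ioo (0:ℝ) 1) with hLdef
  have h_tend0 : Tendsto ψ (𝓝[>] (0:ℝ)) (𝓝 Linf) := by
    refine MonotoneOn.tendsto_nhdsWithin_Ioo_right (x := (0:ℝ)) (y := (1:ℝ))
      ⟨1/2, by norm_num⟩
      (hmono.mono Ioo_subset_Icc_self) ⟨0, ?_⟩
    rintro _ ⟨t, ht, rfl⟩
    exact (hmem t ⟨ht.1.le, ht.2.le⟩).1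
  have ha_tend0 : Tendsto a atTop (𝓝 0) := by
    rw [hadef]
    apply Tendsto.div_atTop (tendsto_const_nhds)
    apply tendsto_atTop_add_const_right atTop 3 tendsto_natCast_atTop_atTop
  have h1 : Tendsto (fun n => ψ (a n)) atTop (𝓝 Linf) := by
    apply h_tend0.comp
    rw [tendsto_nhdsWithin_iff]
    exact ⟨ha_tend0, Eventually.of_forall fun n => ha_pos n⟩
  have hb_tend : Tendsto b atTop (𝓝 u) := by
    have : Tendsto (fun n => u - a n) atTop (𝓝 (u - 0)) :=
      tendsto_const_nhds.sub ha_tend0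
    rw [sub_zero] at this
    simpa only [← hba] using this
  have h2 : Tendsto (fun n => ψ (b n)) atTop (𝓝 (ψ u)) := by
    apply (psi_left_tendsto hconc hψ0 hψ1 hmem ⟨hu0, hu1⟩).comp
    rw [tendsto_nhdsWithin_iff]
    exact ⟨hb_tend, Eventually.of_forall fun n => hb_lt n⟩
  have hmemIcc : ∀ n, a n ∈ Icc (0:ℝ) 1 ∧ b n ∈ Icc (0:ℝ) 1 := fun n =>
    ⟨⟨(ha_pos n).le, ((hab n).le.trans ((hb_lt n).le.trans hu1))⟩,
     ⟨(hb_pos n).le, (hb_lt n).le.trans hu1⟩⟩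
  have hseq_mono : Monotone (fun n => ENNReal.ofReal (ψ (b n) - ψ (a n))) := by
    intro n m hnm
    apply ENNReal.ofReal_le_ofReal
    have e1 : ψ (b n) ≤ ψ (b m) := hmono (hmemIcc n).2 (hmemIcc m).2 (hb_mono hnm)
    have e2 : ψ (a m) ≤ ψ (a n) := hmono (hmemIcc m).1 (hmemIcc n).1 (ha_anti hnm)
    linarith
  have hlim : Tendsto (fun n => ENNReal.ofReal (ψ (b n) - ψ (a n))) atTop
      (𝓝 (ENNReal.ofReal (ψ u - Linf))) := ENNReal.tendsto_ofReal (h2.sub h1)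
  exact tendsto_nhds_unique (tendsto_atTop_iSup hseq_mono) hlim


lemma toReal_ofReal_eq_max (a : ℝ) : (ENNReal.ofReal a).toReal = max a 0 := by
  rcases le_total a 0 with h | h
  · rw [ENNReal.ofReal_eq_zero.2 h, max_eq_right h, ENNReal.toReal_zero]
  · rw [ENNReal.toReal_ofReal h, max_eq_left h]

lemma ofReal_max_zero (a : ℝ) : ENNReal.ofReal (max a 0) = ENNReal.ofReal a := by
  rcases le_total a 0 with h | h
  · rw [max_eq_right h, ENNReal.ofReal_eq_zero.2 h, ENNReal.ofReal_zero]
  · rw [max_eq_left h]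

end Stmt17Aux

theorem stmt17 {Ω : Type*} [mF : MeasurableSpace Ω] (mG : MeasurableSpace Ω) (hG : mG ≤ mF)
    (c : Set Ω → ℝ) (hc : IsCapacity c)
    (φ : Ω → ℝ → ℝ) (hφ : IsRandDistortion mG φ)
    (hconc : ∀ ω, ConcaveOn ℝ (Set.Icc (0:ℝ) 1) (φ ω))
    (X : Ω → ℝ) (hX : BddMeas X) :
    ∀ ω, rdChoquet φ c X ω
      = (⨅ s : Set.Ioo (0:ℝ) 1, φ ω s.1) * (⨆ s : Set.Ioo (0:ℝ) 1, rplusCore c X s.1)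
        + ∫ t in Set.Ioo (0:ℝ) 1,
            derivWithin (φ ω) (Set.Ioi (1 - t)) (1 - t) * rplusCore c X t := by
  intro ω
  obtain ⟨hcE, hcU, hcM⟩ := hc
  obtain ⟨hXm, M, hM⟩ := hX
  obtain ⟨hφ0, hφ1, hφmono, hφmem, _hφmeas⟩ := hφ
  have hM0 : (0:ℝ) ≤ M := (abs_nonneg _).trans (hM ω)
  set ψ : ℝ → ℝ := φ ω with hψdef
  have hψc : ConcaveOn ℝ (Icc (0:ℝ) 1) ψ := hconc ω
  have hψ0 : ψ 0 = 0 := hφ0 ω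
  have hψ1 : ψ 1 = 1 := hφ1 ω
  have hψmono : MonotoneOn ψ (Icc (0:ℝ) 1) := hφmono ω
  have hψmem : ∀ t ∈ Icc (0:ℝ) 1, ψ t ∈ Icc (0:ℝ) 1 := hφmem ω
  set g : ℝ → ℝ := fun x => c {ω' | X ω' > x} with hgdef
  have hg01 : ∀ x, g x ∈ Icc (0:ℝ) 1 := fun x =>
    ⟨hcE ▸ hcM ∅ _ (empty_subset _), hcU ▸ hcM _ univ (subset_univ _)⟩
  have hganti : Antitone g := fun x y hxy =>
    hcM _ _ (fun ω' (h : X ω' > y) => lt_of_le_of_lt hxy h)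
  have hgM : ∀ x, M ≤ x → g x = 0 := by
    intro x hx
    have he : {ω' | X ω' > x} = ∅ := eq_empty_iff_forall_notMem.2 fun ω' h =>
      absurd h (not_lt.2 (((le_abs_self _).trans (hM ω')).trans hx))
    rw [hgdef]; dsimp only; rw [he, hcE]
  have hgM' : ∀ x, x < -M → g x = 1 := by
    intro x hx
    have he : {ω' | X ω' > x} = univ := eq_univ_iff_forall.2 fun ω' =>
      lt_of_lt_of_le hx (neg_le_of_abs_le (hM ω'))
    rw [hgdef]; dsimp only; rw [he, hcU]
  have hgmeas : Measurable g := hganti.measurable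
  set D : ℝ → ℝ := fun s => derivWithin ψ (Ioi s) s with hDdef
  have hDmeas : Measurable D := measurable_derivWithin_Ioi ψ
  have hDnn : ∀ s ∈ Ioo (0:ℝ) 1, 0 ≤ D s := fun s hs =>
    Stmt17Aux.rightDeriv_nonneg hψc hψmono hs
  set L : ℝ := sInf (ψ '' Ioo (0:ℝ) 1) with hLdef
  have hbb : BddBelow (ψ '' Ioo (0:ℝ) 1) :=
    ⟨0, by rintro _ ⟨t, ht, rfl⟩; exact (hψmem t ⟨ht.1.le, ht.2.le⟩).1⟩
  have hL_iInf : (⨅ s : Set.Ioo (0:ℝ) 1, ψ s.1) = L := by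
    rw [hLdef, image_eq_range]; rfl
  have hL0 : 0 ≤ L :=
    Real.sInf_nonneg (by rintro _ ⟨t, ht, rfl⟩; exact (hψmem t ⟨ht.1.le, ht.2.le⟩).1)
  have hLle : ∀ u ∈ Ioc (0:ℝ) 1, L ≤ ψ u := by
    intro u hu
    have h1 : L ≤ ψ (u/2) :=
      csInf_le hbb (mem_image_of_mem _ ⟨by linarith [hu.1], by linarith [hu.2]⟩)
    exact h1.trans (hψmono ⟨by linarith [hu.1], by linarith [hu.2]⟩
      ⟨hu.1.le, hu.2⟩ (by linarith [hu.1]))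
  have hψle1 : ∀ u ∈ Icc (0:ℝ) 1, ψ u ≤ 1 := fun u hu => (hψmem u hu).2
  have key : ∀ u ∈ Ioc (0:ℝ) 1,
      ∫⁻ s in Ioo (0:ℝ) u, ENNReal.ofReal (D s) = ENNReal.ofReal (ψ u - L) :=
    fun u hu => Stmt17Aux.lintegral_rightDeriv hψc hψ0 hψ1 hψmono hψmem hu
  -- the cut function
  set A : ℝ → ℝ := fun s => sSup {x | s < g x} with hAdef
  have hSne : ∀ s, s < 1 → (-M-1) ∈ {x | s < g x} := fun s hs => by
    simp only [mem_setOf_eq]; rw [hgM' _ (by linarith)]; exact hs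
  have hSle : ∀ s, 0 ≤ s → ∀ x ∈ {x | s < g x}, x ≤ M := by
    intro s hs x hx
    by_contra h
    push_neg at h
    rw [mem_setOf_eq, hgM x h.le] at hx
    exact absurd hx (not_lt.2 hs)
  have hSbdd : ∀ s, 0 ≤ s → BddAbove {x | s < g x} := fun s hs => ⟨M, hSle s hs⟩
  have hlower : ∀ s, 0 ≤ s → s < 1 → Iio (A s) ⊆ {x | s < g x} := by
    intro s hs0 hs1 x hx
    obtain ⟨y, hy, hxy⟩ := exists_lt_of_lt_csSup ⟨_, hSne s hs1⟩ hx
    exact lt_of_lt_of_le hy (hganti hxy.le)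
  have hupper : ∀ s, 0 ≤ s → {x | s < g x} ⊆ Iic (A s) := fun s hs x hx =>
    le_csSup (hSbdd s hs) hx
  have hAleM : ∀ s, 0 ≤ s → s < 1 → A s ≤ M := fun s hs0 hs1 =>
    csSup_le ⟨_, hSne s hs1⟩ (hSle s hs0)
  have hAge : ∀ s, 0 ≤ s → s < 1 → -M-1 ≤ A s := fun s hs0 hs1 =>
    le_csSup (hSbdd s hs0) (hSne s hs1)
  have hvolpos : ∀ s, s ∈ Ico (0:ℝ) 1 →
      volume ({x | s < g x} ∩ Ioi 0) = ENNReal.ofReal (A s) := by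
    intro s hs
    apply le_antisymm
    · calc volume ({x | s < g x} ∩ Ioi 0) ≤ volume (Ioc 0 (A s)) :=
            measure_mono (fun x hx => ⟨hx.2, hupper s hs.1 hx.1⟩)
        _ = ENNReal.ofReal (A s) := by rw [Real.volume_Ioc, sub_zero]
    · calc ENNReal.ofReal (A s) = volume (Ioo 0 (A s)) := by
            rw [Real.volume_Ioo, sub_zero]
        _ ≤ volume ({x | s < g x} ∩ Ioi 0) :=
            measure_mono (fun x hx => ⟨hlower s hs.1 hs.2 hx.2, hx.1⟩)
  have hvolneg : ∀ s, s ∈ Ico (0:ℝ) 1 →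
      volume ({x | g x ≤ s} ∩ Iio 0) = ENNReal.ofReal (-(A s)) := by
    intro s hs
    apply le_antisymm
    · calc volume ({x | g x ≤ s} ∩ Iio 0) ≤ volume (Ico (A s) 0) := by
            refine measure_mono (fun x hx => ⟨?_, hx.2⟩)
            show A s ≤ x
            by_contra h
            push_neg at h
            exact absurd (show g x ≤ s from hx.1)
              (not_le.2 (show s < g x from hlower s hs.1 hs.2 h))
        _ = ENNReal.ofReal (-(A s)) := by rw [Real.volume_Ico, zero_sub]
    · calc ENNReal.ofReal (-(A s)) = volume (Ioo (A s) 0) := by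
            rw [Real.volume_Ioo, zero_sub]
        _ ≤ volume ({x | g x ≤ s} ∩ Iio 0) := by
            refine measure_mono (fun x hx => ⟨?_, hx.2⟩)
            show g x ≤ s
            by_contra h
            push_neg at h
            exact absurd (show x ≤ A s from hupper s hs.1 h) (not_le.2 hx.1)
  -- monotone extension of A
  set Ahat : ℝ → ℝ := fun s => if s < 1 then A (max s 0) else -M-1 with hAhatdef
  have hAhat_eq : ∀ s ∈ Ioo (0:ℝ) 1, Ahat s = A s := fun s hs => by
    rw [hAhatdef]; dsimp only; rw [if_pos hs.2, max_eq_left hs.1.le]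
  have hA_anti : AntitoneOn A (Ico (0:ℝ) 1) := by
    intro s hs t ht hst
    exact csSup_le_csSup (hSbdd s hs.1) ⟨_, hSne t ht.2⟩
      (fun x hx => lt_of_le_of_lt hst hx)
  have hmax_mem : ∀ s : ℝ, s < 1 → max s 0 ∈ Ico (0:ℝ) 1 := fun s hs =>
    ⟨le_max_right _ _, max_lt hs zero_lt_one⟩
  have hAhat_anti : Antitone Ahat := by
    intro s t hst
    rw [hAhatdef]; dsimp only
    by_cases ht : t < 1
    · rw [if_pos ht, if_pos (lt_of_le_of_lt hst ht)]
      exact hA_anti (hmax_mem s (lt_of_le_of_lt hst ht)) (hmax_mem t ht)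
        (max_le_max hst (le_refl 0))
    · rw [if_neg ht]
      by_cases hs : s < 1
      · rw [if_pos hs]
        exact hAge _ (le_max_right _ _) (hmax_mem s hs).2
      · rw [if_neg hs]
  have hAhat_meas : Measurable Ahat := hAhat_anti.measurable
  have hAhat_abs : ∀ s, |Ahat s| ≤ M + 1 := by
    intro s
    rw [hAhatdef]; dsimp only
    by_cases hs : s < 1
    · rw [if_pos hs, abs_le]
      constructor
      · linarith [hAge _ (le_max_right s 0) (hmax_mem s hs).2]
      · linarith [hAleM _ (le_max_right s 0) (hmax_mem s hs).2]
    · rw [if_neg hs, abs_le]; constructor <;> linarith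
  -- measurable sets
  have hKpos : MeasurableSet {p : ℝ × ℝ | p.2 < g p.1} :=
    measurableSet_lt measurable_snd (hgmeas.comp measurable_fst)
  have hKneg : MeasurableSet {p : ℝ × ℝ | g p.1 ≤ p.2} :=
    measurableSet_le (hgmeas.comp measurable_fst) measurable_snd
  have hUs : ∀ s : ℝ, MeasurableSet {y : ℝ | s < g y} := fun s =>
    measurableSet_lt measurable_const hgmeas
  have hUs' : ∀ s : ℝ, MeasurableSet {y : ℝ | g y ≤ s} := fun s =>
    measurableSet_le hgmeas measurable_const
  set Tpos := ∫⁻ s in Ioo (0:ℝ) 1, ENNReal.ofReal (D s) * ENNReal.ofReal (A s) with hTposdef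
  set Tneg := ∫⁻ s in Ioo (0:ℝ) 1, ENNReal.ofReal (D s) * ENNReal.ofReal (-(A s)) with hTnegdef
  -- pointwise identities
  have hpoint : ∀ x : ℝ, ENNReal.ofReal (ψ (g x)) =
      ENNReal.ofReal L * ({y : ℝ | 0 < g y}.indicator 1 x)
        + ∫⁻ s in Ioo 0 (g x), ENNReal.ofReal (D s) := by
    intro x
    by_cases h0 : 0 < g x
    · rw [key (g x) ⟨h0, (hg01 x).2⟩, indicator_of_mem (show x ∈ {y : ℝ | 0 < g y} from h0),
        Pi.one_apply, mul_one,
        ← ENNReal.ofReal_add hL0 (sub_nonneg.2 (hLle _ ⟨h0, (hg01 x).2⟩))]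
      ring_nf
    · have hg0 : g x = 0 := le_antisymm (not_lt.1 h0) (hg01 x).1
      rw [hg0, hψ0, indicator_of_notMem (show x ∉ {y : ℝ | 0 < g y} by
        simp [hg0]), Ioo_self]
      simp
  have hpoint' : ∀ x : ℝ, ENNReal.ofReal (1 - ψ (g x)) =
      ENNReal.ofReal L * ({y : ℝ | g y ≤ 0}.indicator 1 x)
        + ∫⁻ s in Ioo (0:ℝ) 1 ∩ Ici (g x), ENNReal.ofReal (D s) := by
    intro x
    by_cases h0 : 0 < g x
    · rw [indicator_of_notMem (show x ∉ {y : ℝ | g y ≤ 0} by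
        simp only [mem_setOf_eq, not_le]; exact h0), mul_zero, zero_add]
      have hsplit : Ioo (0:ℝ) 1 = Ioo 0 (g x) ∪ (Ioo 0 1 ∩ Ici (g x)) := by
        ext s
        simp only [mem_union, mem_Ioo, mem_inter_iff, mem_Ici]
        constructor
        · rintro ⟨h1, h2⟩
          rcases lt_or_ge s (g x) with h | h
          · exact Or.inl ⟨h1, h⟩
          · exact Or.inr ⟨⟨h1, h2⟩, h⟩
        · rintro (⟨h1, h2⟩ | ⟨⟨h1, h2⟩, h3⟩)
          · exact ⟨h1, lt_of_lt_of_le h2 (hg01 x).2⟩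
          · exact ⟨h1, h2⟩
      have hdisj : Disjoint (Ioo (0:ℝ) (g x)) (Ioo 0 1 ∩ Ici (g x)) := by
        rw [Set.disjoint_left]
        rintro s ⟨hs1, hs2⟩ ⟨_, hs3⟩
        exact absurd hs3 (not_le.2 hs2)
      have h3 : ∫⁻ s in Ioo (0:ℝ) 1, ENNReal.ofReal (D s)
          = (∫⁻ s in Ioo 0 (g x), ENNReal.ofReal (D s))
            + ∫⁻ s in Ioo 0 1 ∩ Ici (g x), ENNReal.ofReal (D s) := by
        conv_lhs => rw [hsplit]
        rw [lintegral_union (measurableSet_Ioo.inter measurableSet_Ici) hdisj]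
      rw [key 1 ⟨zero_lt_one, le_refl 1⟩, hψ1, key (g x) ⟨h0, (hg01 x).2⟩] at h3
      have h4 : ENNReal.ofReal (1 - L)
          = ENNReal.ofReal (ψ (g x) - L) + ENNReal.ofReal (1 - ψ (g x)) := by
        rw [← ENNReal.ofReal_add (sub_nonneg.2 (hLle _ ⟨h0, (hg01 x).2⟩))
          (sub_nonneg.2 (hψle1 _ (hg01 x)))]
        ring_nf
      rw [h4] at h3
      exact ((ENNReal.add_right_inj ENNReal.ofReal_ne_top).1 h3.symm).symm
    · have hg0 : g x = 0 := le_antisymm (not_lt.1 h0) (hg01 x).1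
      rw [hg0, hψ0, sub_zero, indicator_of_mem (show x ∈ {y : ℝ | g y ≤ 0} by
        simp [hg0]), Pi.one_apply, mul_one]
      have hinter : Ioo (0:ℝ) 1 ∩ Ici (0:ℝ) = Ioo 0 1 :=
        inter_eq_left.2 (fun s hs => hs.1.le)
      rw [hinter, key 1 ⟨zero_lt_one, le_refl 1⟩, hψ1,
        ← ENNReal.ofReal_add hL0 (by linarith [hLle 1 ⟨zero_lt_one, le_refl 1⟩, hψ1] : (0:ℝ) ≤ 1 - L)]
      ring_nf
  -- Tonelli
  have hIplus : (∫⁻ x in Ioi (0:ℝ), ENNReal.ofReal (ψ (g x)))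
      = ENNReal.ofReal L * ENNReal.ofReal (A 0) + Tpos := by
    have hU0 : MeasurableSet {y : ℝ | 0 < g y} := hUs 0
    have hFmeas : Measurable (fun p : ℝ × ℝ =>
        ENNReal.ofReal (D p.2) * ({p : ℝ × ℝ | p.2 < g p.1}.indicator 1 p)) :=
      (ENNReal.measurable_ofReal.comp (hDmeas.comp measurable_snd)).mul
        (measurable_one.indicator hKpos)
    have h1 : (∫⁻ x in Ioi (0:ℝ), ENNReal.ofReal (ψ (g x)))
        = ∫⁻ x in Ioi (0:ℝ), (ENNReal.ofReal L * ({y : ℝ | 0 < g y}.indicator 1 x)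
          + ∫⁻ s in Ioo (0:ℝ) 1,
            (ENNReal.ofReal (D s) * ({p : ℝ × ℝ | p.2 < g p.1}.indicator 1 (x, s)))) := by
      refine lintegral_congr fun x => ?_
      rw [hpoint x]
      congr 1
      have hfun : (fun s => ENNReal.ofReal (D s) * ({p : ℝ × ℝ | p.2 < g p.1}.indicator 1 (x, s)))
          = fun s => (Iio (g x)).indicator (fun s => ENNReal.ofReal (D s)) s := by
        funext s
        by_cases h : s < g x
        · rw [Set.indicator_of_mem (show (x, s) ∈ {p : ℝ × ℝ | p.2 < g p.1} from h),
            Set.indicator_of_mem (show s ∈ Iio (g x) from h), Pi.one_apply, mul_one]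
        · rw [Set.indicator_of_notMem (show (x, s) ∉ {p : ℝ × ℝ | p.2 < g p.1} from h),
            Set.indicator_of_notMem (show s ∉ Iio (g x) from h), mul_zero]
      rw [hfun, lintegral_indicator measurableSet_Iio,
        Measure.restrict_restrict measurableSet_Iio,
        show Iio (g x) ∩ Ioo (0:ℝ) 1 = Ioo 0 (g x) by
          ext s
          simp only [mem_inter_iff, mem_Iio, mem_Ioo]
          constructor
          · rintro ⟨h1, h2, h3⟩; exact ⟨h2, h1⟩
          · rintro ⟨h1, h2⟩; exact ⟨h2, h1, lt_of_lt_of_le h2 (hg01 x).2⟩]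
    rw [h1, lintegral_add_left ((measurable_one.indicator hU0).const_mul _)]
    congr 1
    · rw [lintegral_const_mul _ (measurable_one.indicator hU0), lintegral_indicator_one hU0,
        Measure.restrict_apply hU0, hvolpos 0 ⟨le_refl 0, zero_lt_one⟩]
    · rw [lintegral_lintegral_swap hFmeas.aemeasurable, hTposdef]
      refine setLIntegral_congr_fun measurableSet_Ioo (fun s hs => ?_)
      have hfun : (fun x => ENNReal.ofReal (D s) * ({p : ℝ × ℝ | p.2 < g p.1}.indicator 1 (x, s)))
          = fun x => ENNReal.ofReal (D s) * ({y : ℝ | s < g y}.indicator 1 x) := by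
        funext x
        by_cases h : s < g x
        · rw [Set.indicator_of_mem (show (x, s) ∈ {p : ℝ × ℝ | p.2 < g p.1} from h),
            Set.indicator_of_mem (show x ∈ {y : ℝ | s < g y} from h)]
          rfl
        · rw [Set.indicator_of_notMem (show (x, s) ∉ {p : ℝ × ℝ | p.2 < g p.1} from h),
            Set.indicator_of_notMem (show x ∉ {y : ℝ | s < g y} from h)]
      rw [hfun, lintegral_const_mul _ (measurable_one.indicator (hUs s)),
        lintegral_indicator_one (hUs s), Measure.restrict_apply (hUs s),
        hvolpos s ⟨hs.1.le, hs.2⟩]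
  have hIminus : (∫⁻ x in Iio (0:ℝ), ENNReal.ofReal (1 - ψ (g x)))
      = ENNReal.ofReal L * ENNReal.ofReal (-(A 0)) + Tneg := by
    have hV0 : MeasurableSet {y : ℝ | g y ≤ 0} := hUs' 0
    have hFmeas : Measurable (fun p : ℝ × ℝ =>
        ENNReal.ofReal (D p.2) * ({p : ℝ × ℝ | g p.1 ≤ p.2}.indicator 1 p)) :=
      (ENNReal.measurable_ofReal.comp (hDmeas.comp measurable_snd)).mul
        (measurable_one.indicator hKneg)
    have h1 : (∫⁻ x in Iio (0:ℝ), ENNReal.ofReal (1 - ψ (g x)))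
        = ∫⁻ x in Iio (0:ℝ), (ENNReal.ofReal L * ({y : ℝ | g y ≤ 0}.indicator 1 x)
          + ∫⁻ s in Ioo (0:ℝ) 1,
            (ENNReal.ofReal (D s) * ({p : ℝ × ℝ | g p.1 ≤ p.2}.indicator 1 (x, s)))) := by
      refine lintegral_congr fun x => ?_
      rw [hpoint' x]
      congr 1
      have hfun : (fun s => ENNReal.ofReal (D s) * ({p : ℝ × ℝ | g p.1 ≤ p.2}.indicator 1 (x, s)))
          = fun s => (Ici (g x)).indicator (fun s => ENNReal.ofReal (D s)) s := by
        funext s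
        by_cases h : g x ≤ s
        · rw [Set.indicator_of_mem (show (x, s) ∈ {p : ℝ × ℝ | g p.1 ≤ p.2} from h),
            Set.indicator_of_mem (show s ∈ Ici (g x) from h), Pi.one_apply, mul_one]
        · rw [Set.indicator_of_notMem (show (x, s) ∉ {p : ℝ × ℝ | g p.1 ≤ p.2} from h),
            Set.indicator_of_notMem (show s ∉ Ici (g x) from h), mul_zero]
      rw [hfun, lintegral_indicator measurableSet_Ici,
        Measure.restrict_restrict measurableSet_Ici, inter_comm]
    rw [h1, lintegral_add_left ((measurable_one.indicator hV0).const_mul _)]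
    congr 1
    · rw [lintegral_const_mul _ (measurable_one.indicator hV0), lintegral_indicator_one hV0,
        Measure.restrict_apply hV0, hvolneg 0 ⟨le_refl 0, zero_lt_one⟩]
    · rw [lintegral_lintegral_swap hFmeas.aemeasurable, hTnegdef]
      refine setLIntegral_congr_fun measurableSet_Ioo (fun s hs => ?_)
      have hfun : (fun x => ENNReal.ofReal (D s) * ({p : ℝ × ℝ | g p.1 ≤ p.2}.indicator 1 (x, s)))
          = fun x => ENNReal.ofReal (D s) * ({y : ℝ | g y ≤ s}.indicator 1 x) := by
        funext x
        by_cases h : g x ≤ s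
        · rw [Set.indicator_of_mem (show (x, s) ∈ {p : ℝ × ℝ | g p.1 ≤ p.2} from h),
            Set.indicator_of_mem (show x ∈ {y : ℝ | g y ≤ s} from h)]
          rfl
        · rw [Set.indicator_of_notMem (show (x, s) ∉ {p : ℝ × ℝ | g p.1 ≤ p.2} from h),
            Set.indicator_of_notMem (show x ∉ {y : ℝ | g y ≤ s} from h)]
      rw [hfun, lintegral_const_mul _ (measurable_one.indicator (hUs' s)),
        lintegral_indicator_one (hUs' s), Measure.restrict_apply (hUs' s),
        hvolneg s ⟨hs.1.le, hs.2⟩]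
  -- conversion of LHS
  have hcomp_anti : Antitone (fun x => ψ (g x)) := fun x y hxy =>
    hψmono (hg01 y) (hg01 x) (hganti hxy)
  have hmeasψg : Measurable (fun x => ψ (g x)) := hcomp_anti.measurable
  have hint_pos : ∫ x in Ioi (0:ℝ), ψ (g x)
      = (∫⁻ x in Ioi (0:ℝ), ENNReal.ofReal (ψ (g x))).toReal :=
    integral_eq_lintegral_of_nonneg_ae (ae_of_all _ fun x => (hψmem _ (hg01 x)).1)
      hmeasψg.aestronglyMeasurable.restrict
  have hint_neg : ∫ x in Iio (0:ℝ), (ψ (g x) - 1)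
      = -((∫⁻ x in Iio (0:ℝ), ENNReal.ofReal (1 - ψ (g x))).toReal) := by
    have h1 : ∫ x in Iio (0:ℝ), (ψ (g x) - 1) = -∫ x in Iio (0:ℝ), (1 - ψ (g x)) := by
      rw [← integral_neg]; congr 1; funext x; ring
    rw [h1, integral_eq_lintegral_of_nonneg_ae
      (ae_of_all _ fun x => by show (0:ℝ) ≤ 1 - ψ (g x); linarith [(hψmem _ (hg01 x)).2])
      ((hmeasψg.const_sub 1).aestronglyMeasurable.restrict)]
  -- finiteness
  have hfin_pos : (∫⁻ x in Ioi (0:ℝ), ENNReal.ofReal (ψ (g x))) ≠ ⊤ := by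
    have hb : (∫⁻ x in Ioi (0:ℝ), ENNReal.ofReal (ψ (g x)))
        ≤ ∫⁻ x in Ioi (0:ℝ), (Ioc (0:ℝ) M).indicator 1 x := by
      refine setLIntegral_mono' measurableSet_Ioi (fun x hx => ?_)
      by_cases h : x ≤ M
      · rw [Set.indicator_of_mem (show x ∈ Ioc (0:ℝ) M from ⟨hx, h⟩), Pi.one_apply]
        exact ENNReal.ofReal_le_one.2 (hψle1 _ (hg01 x))
      · rw [hgM x (not_le.1 h).le, hψ0, Set.indicator_of_notMem
          (show x ∉ Ioc (0:ℝ) M from fun hm => h hm.2)]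
        simp
    refine ne_top_of_le_ne_top ?_ hb
    rw [lintegral_indicator_one measurableSet_Ioc, Measure.restrict_apply measurableSet_Ioc]
    exact ne_top_of_le_ne_top (by rw [Real.volume_Ioc]; exact ENNReal.ofReal_ne_top)
      (measure_mono inter_subset_left)
  have hfin_neg : (∫⁻ x in Iio (0:ℝ), ENNReal.ofReal (1 - ψ (g x))) ≠ ⊤ := by
    have hb : (∫⁻ x in Iio (0:ℝ), ENNReal.ofReal (1 - ψ (g x)))
        ≤ ∫⁻ x in Iio (0:ℝ), (Ico (-M) (0:ℝ)).indicator 1 x := by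
      refine setLIntegral_mono' measurableSet_Iio (fun x hx => ?_)
      by_cases h : -M ≤ x
      · rw [Set.indicator_of_mem (show x ∈ Ico (-M) (0:ℝ) from ⟨h, hx⟩), Pi.one_apply]
        refine ENNReal.ofReal_le_one.2 ?_
        linarith [(hψmem _ (hg01 x)).1]
      · rw [hgM' x (not_le.1 h), hψ1, sub_self, Set.indicator_of_notMem
          (show x ∉ Ico (-M) (0:ℝ) from fun hm => h hm.1)]
        simp
    refine ne_top_of_le_ne_top ?_ hb
    rw [lintegral_indicator_one measurableSet_Ico, Measure.restrict_apply measurableSet_Ico]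
    exact ne_top_of_le_ne_top (by rw [Real.volume_Ico]; exact ENNReal.ofReal_ne_top)
      (measure_mono inter_subset_left)
  have hfinP : ENNReal.ofReal L * ENNReal.ofReal (A 0) ≠ ⊤ ∧ Tpos ≠ ⊤ := by
    rw [← ENNReal.add_ne_top, ← hIplus]; exact hfin_pos
  have hfinN : ENNReal.ofReal L * ENNReal.ofReal (-(A 0)) ≠ ⊤ ∧ Tneg ≠ ⊤ := by
    rw [← ENNReal.add_ne_top, ← hIminus]; exact hfin_neg
  -- the sup identity
  have hdist : ∀ x, distFun c X x = 1 - g x := fun x => rfl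
  have hRmem : ∀ t : ℝ, 0 ≤ t → (-M-1) ∈ {x | distFun c X x ≤ t} := by
    intro t ht
    show distFun c X (-M-1) ≤ t
    rw [hdist, hgM' _ (by linarith)]
    simpa using ht
  have hRle : ∀ t : ℝ, t < 1 → ∀ x ∈ {x | distFun c X x ≤ t}, x ≤ M := by
    intro t ht x hx
    by_contra h
    push_neg at h
    have : distFun c X x = 1 := by rw [hdist, hgM x h.le, sub_zero]
    rw [mem_setOf_eq, this] at hx
    linarith
  have hRbdd : ∀ t : ℝ, t < 1 → BddAbove {x | distFun c X x ≤ t} := fun t ht =>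
    ⟨M, hRle t ht⟩
  have hrleA0 : ∀ t ∈ Ioo (0:ℝ) 1, rplusCore c X t ≤ A 0 := by
    intro t ht
    refine csSup_le_csSup (hSbdd 0 (le_refl 0)) ⟨_, hRmem t ht.1.le⟩ (fun x hx => ?_)
    have h1 : 1 - g x ≤ t := by rw [← hdist]; exact hx
    show (0:ℝ) < g x
    linarith [ht.2]
  have hbddimage : BddAbove (rplusCore c X '' Ioo (0:ℝ) 1) := by
    refine ⟨M, ?_⟩
    rintro _ ⟨t, ht, rfl⟩
    exact csSup_le ⟨_, hRmem t ht.1.le⟩ (hRle t ht.2)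
  have hSup : (⨆ s : Set.Ioo (0:ℝ) 1, rplusCore c X s.1) = A 0 := by
    rw [iSup, ← image_eq_range]
    apply le_antisymm
    · refine csSup_le ⟨_, mem_image_of_mem _ (show (1/2 : ℝ) ∈ Ioo (0:ℝ) 1 by norm_num)⟩ ?_
      rintro _ ⟨t, ht, rfl⟩
      exact hrleA0 t ht
    · refine csSup_le ⟨_, hSne 0 zero_lt_one⟩ (fun x hx => ?_)
      have hgx : (0:ℝ) < g x := hx
      set t0 : ℝ := max (1 - g x) (1/2) with ht0def
      have ht0 : t0 ∈ Ioo (0:ℝ) 1 :=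
        ⟨lt_of_lt_of_le (by norm_num) (le_max_right _ _),
         max_lt (by linarith) (by norm_num)⟩
      have hxmem : x ∈ {y | distFun c X y ≤ t0} := by
        show distFun c X x ≤ t0
        rw [hdist]
        exact le_max_left _ _
      exact (le_csSup (hRbdd t0 ht0.2) hxmem).trans
        (le_csSup hbddimage (mem_image_of_mem _ ht0))
  -- RHS integral
  have hRHS_int : (∫ t in Ioo (0:ℝ) 1, derivWithin ψ (Ioi (1 - t)) (1 - t) * rplusCore c X t)
      = Tpos.toReal - Tneg.toReal := by
    -- step 1: change of variables t ↦ 1 - t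
    have hstep1 : (∫ t in Ioo (0:ℝ) 1, derivWithin ψ (Ioi (1 - t)) (1 - t) * rplusCore c X t)
        = ∫ s in Ioo (0:ℝ) 1, D s * rplusCore c X (1 - s) := by
      have e1 := intervalIntegral.integral_comp_sub_left (a := (0:ℝ)) (b := 1)
        (fun s => D s * rplusCore c X (1 - s)) 1
      simp only [sub_sub_cancel, sub_self, sub_zero] at e1
      calc (∫ t in Ioo (0:ℝ) 1, derivWithin ψ (Ioi (1 - t)) (1 - t) * rplusCore c X t)
          = ∫ t in (0:ℝ)..1, D (1 - t) * rplusCore c X t := by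
            rw [intervalIntegral.integral_of_le zero_le_one, integral_Ioc_eq_integral_Ioo]
        _ = ∫ s in (0:ℝ)..1, D s * rplusCore c X (1 - s) := e1
        _ = ∫ s in Ioo (0:ℝ) 1, D s * rplusCore c X (1 - s) := by
            rw [intervalIntegral.integral_of_le zero_le_one, integral_Ioc_eq_integral_Ioo]
    -- step 2: a.e. identification with Ahat
    have hae : ∀ᵐ s ∂(volume.restrict (Ioo (0:ℝ) 1)),
        D s * rplusCore c X (1 - s) = D s * Ahat s := by
      have h1 : ∀ᵐ s ∂(volume : Measure ℝ), ContinuousAt Ahat s := by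
        rw [ae_iff]
        exact ((hAhat_anti.countable_not_continuousAt).measure_zero _)
      rw [ae_restrict_iff' measurableSet_Ioo]
      filter_upwards [h1] with s hscont hs
      congr 1
      have hra : A s ≤ rplusCore c X (1 - s) := by
        refine csSup_le_csSup (hRbdd (1 - s) (by linarith [hs.1])) ⟨_, hSne s hs.2⟩
          (fun x hx => ?_)
        show distFun c X x ≤ 1 - s
        rw [hdist]
        have : s < g x := hx
        linarith
      have hle : ∀ s' ∈ Ioo (0:ℝ) s, rplusCore c X (1 - s) ≤ A s' := by
        intro s' hs'
        refine csSup_le_csSup (hSbdd s' hs'.1.le) ⟨_, hRmem (1 - s) (by linarith [hs.2])⟩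
          (fun x hx => ?_)
        have h2 : 1 - g x ≤ 1 - s := by rw [← hdist]; exact hx
        show s' < g x
        linarith [hs'.2]
      have htd : Tendsto Ahat (𝓝[<] s) (𝓝 (Ahat s)) :=
        hscont.tendsto.mono_left nhdsWithin_le_nhds
      have hge : rplusCore c X (1 - s) ≤ Ahat s := by
        refine ge_of_tendsto htd ?_
        filter_upwards [Ioo_mem_nhdsLT hs.1] with s' hs'
        rw [hAhat_eq s' ⟨hs'.1, hs'.2.trans hs.2⟩]
        exact hle s' hs'
      rw [hAhat_eq s hs]
      exact le_antisymm (by rw [← hAhat_eq s hs]; exact hge) hra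
    have hstep2 : (∫ s in Ioo (0:ℝ) 1, D s * rplusCore c X (1 - s))
        = ∫ s in Ioo (0:ℝ) 1, D s * Ahat s := integral_congr_ae hae
    -- step 3: convert to lintegrals
    have hDint : IntegrableOn D (Ioo (0:ℝ) 1) := by
      constructor
      · exact hDmeas.aestronglyMeasurable.restrict
      · rw [hasFiniteIntegral_iff_ofReal ((ae_restrict_iff' measurableSet_Ioo).2
          (ae_of_all _ fun s hs => hDnn s hs))]
        rw [key 1 ⟨zero_lt_one, le_refl 1⟩]
        exact ENNReal.ofReal_lt_top
    have hb1 : ∀ s ∈ Ioo (0:ℝ) 1, ‖D s * max (Ahat s) 0‖ ≤ (M+1) * D s := by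
      intro s hs
      rw [Real.norm_eq_abs, abs_of_nonneg (mul_nonneg (hDnn s hs) (le_max_right _ _))]
      calc D s * max (Ahat s) 0 ≤ D s * (M+1) :=
            mul_le_mul_of_nonneg_left
              (max_le ((le_abs_self _).trans (hAhat_abs s)) (by linarith)) (hDnn s hs)
        _ = (M+1) * D s := mul_comm _ _
    have hb2 : ∀ s ∈ Ioo (0:ℝ) 1, ‖D s * max (-(Ahat s)) 0‖ ≤ (M+1) * D s := by
      intro s hs
      rw [Real.norm_eq_abs, abs_of_nonneg (mul_nonneg (hDnn s hs) (le_max_right _ _))]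
      calc D s * max (-(Ahat s)) 0 ≤ D s * (M+1) :=
            mul_le_mul_of_nonneg_left
              (max_le ((neg_le_abs _).trans (hAhat_abs s)) (by linarith)) (hDnn s hs)
        _ = (M+1) * D s := mul_comm _ _
    have hint1 : IntegrableOn (fun s => D s * max (Ahat s) 0) (Ioo (0:ℝ) 1) := by
      refine Integrable.mono' (hDint.const_mul (M+1))
        ((hDmeas.mul (hAhat_meas.max measurable_const)).aestronglyMeasurable.restrict) ?_
      exact (ae_restrict_iff' measurableSet_Ioo).2 (ae_of_all _ hb1)
    have hint2 : IntegrableOn (fun s => D s * max (-(Ahat s)) 0) (Ioo (0:ℝ) 1) := by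
      refine Integrable.mono' (hDint.const_mul (M+1))
        ((hDmeas.mul ((hAhat_meas.neg).max measurable_const)).aestronglyMeasurable.restrict) ?_
      exact (ae_restrict_iff' measurableSet_Ioo).2 (ae_of_all _ hb2)
    have hsplitfun : EqOn (fun s => D s * Ahat s)
        (fun s => D s * max (Ahat s) 0 - D s * max (-(Ahat s)) 0) (Ioo (0:ℝ) 1) := by
      intro s _
      have hm : max (Ahat s) 0 - max (-(Ahat s)) 0 = Ahat s := by
        rcases le_total (Ahat s) 0 with h | h
        · rw [max_eq_right h, max_eq_left (neg_nonneg.2 h)]; ring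
        · rw [max_eq_left h, max_eq_right (neg_nonpos.2 h)]; ring
      dsimp only
      rw [← mul_sub, hm]
    have hPeq : (∫ s in Ioo (0:ℝ) 1, D s * max (Ahat s) 0) = Tpos.toReal := by
      rw [integral_eq_lintegral_of_nonneg_ae
        ((ae_restrict_iff' measurableSet_Ioo).2 (ae_of_all _ fun s hs =>
          mul_nonneg (hDnn s hs) (le_max_right _ _)))
        ((hDmeas.mul (hAhat_meas.max measurable_const)).aestronglyMeasurable.restrict)]
      congr 1
      rw [hTposdef]
      refine setLIntegral_congr_fun measurableSet_Ioo (fun s hs => ?_)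
      rw [ENNReal.ofReal_mul (hDnn s hs), Stmt17Aux.ofReal_max_zero, hAhat_eq s hs]
    have hNeq : (∫ s in Ioo (0:ℝ) 1, D s * max (-(Ahat s)) 0) = Tneg.toReal := by
      rw [integral_eq_lintegral_of_nonneg_ae
        ((ae_restrict_iff' measurableSet_Ioo).2 (ae_of_all _ fun s hs =>
          mul_nonneg (hDnn s hs) (le_max_right _ _)))
        ((show Measurable (fun s => D s * max (-(Ahat s)) 0) from
          hDmeas.mul ((hAhat_meas.neg).max measurable_const)).aestronglyMeasurable.restrict)]
      congr 1
      rw [hTnegdef]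
      refine setLIntegral_congr_fun measurableSet_Ioo (fun s hs => ?_)
      rw [ENNReal.ofReal_mul (hDnn s hs), Stmt17Aux.ofReal_max_zero, hAhat_eq s hs]
    rw [hstep1, hstep2, setIntegral_congr_fun measurableSet_Ioo hsplitfun,
      integral_sub hint1 hint2, hPeq, hNeq]
  -- assemble
  have hgoal : rdChoquet φ c X ω
      = (∫ x in Ioi (0:ℝ), ψ (g x)) + ∫ x in Iio (0:ℝ), (ψ (g x) - 1) := rfl
  rw [hgoal, hint_pos, hint_neg, hIplus, hIminus, hL_iInf, hSup, hRHS_int]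
  rw [ENNReal.toReal_add hfinP.1 hfinP.2, ENNReal.toReal_add hfinN.1 hfinN.2,
    ENNReal.toReal_mul, ENNReal.toReal_mul, ENNReal.toReal_ofReal hL0,
    Stmt17Aux.toReal_ofReal_eq_max, Stmt17Aux.toReal_ofReal_eq_max]
  have hmax : max (A 0) 0 - max (-(A 0)) 0 = A 0 := by
    rcases le_total (A 0) 0 with h | h
    · rw [max_eq_right h, max_eq_left (neg_nonneg.2 h)]; ring
    · rw [max_eq_left h, max_eq_right (neg_nonpos.2 h)]; ring
  linear_combination L * hmax
end

section
/- If φ^G is a concave G-random distortion function and X ⪯_{sl,c} Y (stop-loss order with respect to the capacity c, i.e. E_c((X−b)⁺) ≤ E_c((Y−b)⁺) for all b ∈ ℝ), then E_{φ^G∘c}(X)(ω) ≤ E_{φ^G∘c}(Y)(ω) for all ω ∈ Ω. -/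
open MeasureTheory Set Filter Topology

noncomputable def Kslope (ψ : ℝ → ℝ) (u : ℝ) : ℝ :=
  sInf ((fun v => (ψ u - ψ v) / (u - v)) '' Set.Ico 0 u)

section Slope
variable {ψ : ℝ → ℝ} (hm : MonotoneOn ψ (Set.Icc 0 1)) (hcv : ConcaveOn ℝ (Set.Icc 0 1) ψ)
  {u : ℝ} (hu : u ∈ Set.Ioc (0:ℝ) 1)

include hm hu in
lemma slope_mem_nonneg : ∀ r ∈ (fun v => (ψ u - ψ v) / (u - v)) '' Set.Ico 0 u, 0 ≤ r := by
  rintro _ ⟨v, hv, rfl⟩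
  have h1 : ψ v ≤ ψ u :=
    hm ⟨hv.1, (hv.2.le.trans hu.2)⟩ ⟨hu.1.le, hu.2⟩ hv.2.le
  have h2 : (0:ℝ) < u - v := by linarith [hv.2]
  exact div_nonneg (by linarith) h2.le

include hm hu in
lemma Kslope_bddBelow : BddBelow ((fun v => (ψ u - ψ v) / (u - v)) '' Set.Ico 0 u) :=
  ⟨0, fun r hr => slope_mem_nonneg hm hu r hr⟩

include hm hu in
lemma Kslope_nonneg : 0 ≤ Kslope ψ u :=
  le_csInf ⟨_, Set.mem_image_of_mem _ (Set.mem_Ico.2 ⟨le_refl 0, hu.1⟩)⟩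
    (slope_mem_nonneg hm hu)

include hm hcv hu in
lemma Kslope_support : ∀ w ∈ Set.Icc (0:ℝ) 1, ψ w ≤ ψ u + Kslope ψ u * (w - u) := by
  intro w hw
  rcases lt_trichotomy w u with h | h | h
  · have hmem : (ψ u - ψ w) / (u - w) ∈ (fun v => (ψ u - ψ v) / (u - v)) '' Set.Ico 0 u :=
      Set.mem_image_of_mem _ (Set.mem_Ico.2 ⟨hw.1, h⟩)
    have hK : Kslope ψ u ≤ (ψ u - ψ w) / (u - w) := csInf_le (Kslope_bddBelow hm hu) hmem
    have huw : (0:ℝ) < u - w := by linarith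
    have : (ψ u - ψ w) / (u - w) * (w - u) ≤ Kslope ψ u * (w - u) := by
      apply mul_le_mul_of_nonpos_right hK (by linarith)
    have heq : (ψ u - ψ w) / (u - w) * (w - u) = ψ w - ψ u := by
      field_simp
      ring
    linarith [heq ▸ this]
  · subst h; simp
  · have hKge : (ψ w - ψ u) / (w - u) ≤ Kslope ψ u := by
      apply le_csInf ⟨_, Set.mem_image_of_mem _ (Set.mem_Ico.2 ⟨le_refl 0, hu.1⟩)⟩
      rintro _ ⟨v, hv, rfl⟩
      have := hcv.slope_anti_adjacent (x := v) (y := u) (z := w)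
        ⟨hv.1, hv.2.le.trans hu.2⟩ hw hv.2 h
      linarith
    have huw : (0:ℝ) < w - u := by linarith
    have : (ψ w - ψ u) / (w - u) * (w - u) ≤ Kslope ψ u * (w - u) :=
      mul_le_mul_of_nonneg_right hKge huw.le
    have heq : (ψ w - ψ u) / (w - u) * (w - u) = ψ w - ψ u := by field_simp
    linarith [heq ▸ this]

include hm hcv in
lemma Kslope_anti {u₁ u₂ : ℝ} (h1 : u₁ ∈ Set.Ioc (0:ℝ) 1) (h2 : u₂ ∈ Set.Ioc (0:ℝ) 1)
    (h : u₁ ≤ u₂) : Kslope ψ u₂ ≤ Kslope ψ u₁ := by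
  rcases eq_or_lt_of_le h with rfl | hlt
  · exact le_refl _
  · have hA : Kslope ψ u₂ ≤ (ψ u₂ - ψ u₁) / (u₂ - u₁) :=
      csInf_le (Kslope_bddBelow hm h2) (Set.mem_image_of_mem _ (Set.mem_Ico.2 ⟨h1.1.le, hlt⟩))
    have hB : (ψ u₂ - ψ u₁) / (u₂ - u₁) ≤ Kslope ψ u₁ := by
      apply le_csInf ⟨_, Set.mem_image_of_mem _ (Set.mem_Ico.2 ⟨le_refl 0, h1.1⟩)⟩
      rintro _ ⟨v, hv, rfl⟩
      have := hcv.slope_anti_adjacent (x := v) (y := u₁) (z := u₂)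
        ⟨hv.1, hv.2.le.trans h1.2⟩ ⟨h1.1.le.trans h, h2.2⟩ hv.2 hlt
      linarith
    linarith

include hm hcv hu in
lemma Kslope_mul_le (hψ0 : ψ 0 = 0) : Kslope ψ u * u ≤ ψ u := by
  have := Kslope_support hm hcv hu 0 ⟨le_refl 0, zero_le_one⟩
  rw [hψ0] at this
  nlinarith [this]

section Upper
variable {a b s : ℝ} {k : ℝ → ℝ}

lemma upper_structure (hab : a ≤ b) (hk : MonotoneOn k (Set.Ioo a b)) :
    ∃ c ∈ Set.Icc a b, Set.Ioo c b ⊆ {x | x ∈ Set.Ioo a b ∧ s < k x} ∧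
      {x | x ∈ Set.Ioo a b ∧ s < k x} ⊆ Set.Ioc c b ∪ {c} := by
  set S := {x | x ∈ Set.Ioo a b ∧ s < k x} with hS
  have hne : (S ∪ {b}).Nonempty := ⟨b, Or.inr rfl⟩
  have hbdd : BddBelow (S ∪ {b}) := by
    refine ⟨a, ?_⟩
    rintro y (hy | rfl)
    · exact hy.1.1.le
    · exact hab
  refine ⟨sInf (S ∪ {b}), ⟨le_csInf hne ?_, csInf_le hbdd (Or.inr rfl)⟩, ?_, ?_⟩
  · rintro y (hy | rfl)
    · exact hy.1.1.le
    · exact hab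
  · intro x hx
    obtain ⟨y, hy, hyx⟩ := exists_lt_of_csInf_lt hne hx.1
    rcases hy with hy | hyb
    · refine ⟨⟨hy.1.1.trans hyx, hx.2⟩, lt_of_lt_of_le hy.2 ?_⟩
      exact hk hy.1 ⟨hy.1.1.trans hyx, hx.2⟩ hyx.le
    · rw [Set.mem_singleton_iff] at hyb
      subst hyb
      exact absurd (hyx.trans hx.2) (lt_irrefl y)
  · intro x hx
    have hcx : sInf (S ∪ {b}) ≤ x := csInf_le hbdd (Or.inl hx)
    rcases eq_or_lt_of_le hcx with h | h
    · exact Or.inr h.symm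
    · exact Or.inl ⟨h, hx.1.2.le⟩

lemma upper_measurableSet (hab : a ≤ b) (hk : MonotoneOn k (Set.Ioo a b)) :
    MeasurableSet {x | x ∈ Set.Ioo a b ∧ s < k x} := by
  obtain ⟨c, _, h1, h2⟩ := upper_structure hab hk (s := s)
  set S := {x | x ∈ Set.Ioo a b ∧ s < k x} with hS
  have heq : S = Set.Ioo c b ∪ (S ∩ {c}) := by
    apply Set.Subset.antisymm
    · intro x hx
      rcases h2 hx with h | h
      · rcases eq_or_lt_of_le h.2 with rfl | hxb
        · exact absurd hx.1.2 (lt_irrefl x)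
        · exact Or.inl ⟨h.1, hxb⟩
      · exact Or.inr ⟨hx, h⟩
    · rintro x (hx | hx)
      · exact h1 hx
      · exact hx.1
  rw [heq]
  exact measurableSet_Ioo.union
    ((Set.subsingleton_singleton.anti Set.inter_subset_right).measurableSet)

lemma upper_ae_Ioc (hab : a ≤ b) (hk : MonotoneOn k (Set.Ioo a b)) :
    ∃ c ∈ Set.Icc a b, {x | x ∈ Set.Ioo a b ∧ s < k x} =ᵐ[volume] Set.Ioc c b := by
  obtain ⟨c, hc, h1, h2⟩ := upper_structure hab hk (s := s)
  refine ⟨c, hc, ?_⟩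
  rw [MeasureTheory.ae_eq_set]
  constructor
  · have hsub : {x | x ∈ Set.Ioo a b ∧ s < k x} \ Set.Ioc c b ⊆ {c} := by
      intro x ⟨hx, hx'⟩
      rcases h2 hx with h | h
      · exact absurd h hx'
      · exact h
    exact measure_mono_null hsub (measure_singleton c)
  · have hsub : Set.Ioc c b \ {x | x ∈ Set.Ioo a b ∧ s < k x} ⊆ {b} := by
      intro x ⟨hx, hx'⟩
      rcases eq_or_lt_of_le hx.2 with rfl | hxb
      · rfl
      · exact absurd (h1 ⟨hx.1, hxb⟩) hx'
    exact measure_mono_null hsub (measure_singleton b)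

end Upper

section Abel

lemma abel_le {a b : ℝ} {k D : ℝ → ℝ} {C : ℝ}
    (hkm : MonotoneOn k (Set.Ioo a b)) (hk0 : ∀ x ∈ Set.Ioo a b, 0 ≤ k x)
    (hkC : ∀ x ∈ Set.Ioo a b, k x ≤ C)
    (hDm : Measurable D) (hDb : ∀ x, |D x| ≤ 2)
    (hΦ : ∀ t ∈ Set.Icc a b, (∫ x in Set.Ioc t b, D x) ≤ 0) :
    (∫ x in Set.Ioo a b, k x * D x) ≤ 0 := by
  by_cases hab : a < b
  swap
  · rw [Set.Ioo_eq_empty hab]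
    simp
  have hab' : a ≤ b := hab.le
  have hne : (Set.Ioo a b).Nonempty := Set.nonempty_Ioo.2 hab
  set ka := sInf (k '' Set.Ioo a b) with hka
  have hbddk : BddBelow (k '' Set.Ioo a b) := by
    refine ⟨0, ?_⟩
    rintro _ ⟨x, hx, rfl⟩
    exact hk0 x hx
  have hka0 : 0 ≤ ka := le_csInf (hne.image k) (by rintro _ ⟨x, hx, rfl⟩; exact hk0 x hx)
  have hkale : ∀ x ∈ Set.Ioo a b, ka ≤ k x := fun x hx =>
    csInf_le hbddk (Set.mem_image_of_mem k hx)
  have hC0 : 0 ≤ C := by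
    obtain ⟨x, hx⟩ := hne
    exact (hk0 x hx).trans (hkC x hx)
  -- sublevel sets
  set S : ℝ → Set ℝ := fun s => {x | x ∈ Set.Ioo a b ∧ ka + s < k x} with hSdef
  have hSmeas : ∀ s, MeasurableSet (S s) := fun s => upper_measurableSet hab' hkm
  have hSint : ∀ s, (∫ x in S s, D x) ≤ 0 := by
    intro s
    obtain ⟨c, hc, hae⟩ := upper_ae_Ioc hab' hkm (s := ka + s)
    rw [MeasureTheory.setIntegral_congr_set hae]
    exact hΦ c hc
  -- the product set
  set A : Set (ℝ × ℝ) := {p | p.1 ∈ Set.Ioo a b ∧ 0 < p.2 ∧ ka + p.2 < k p.1} with hAdef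
  have hA : MeasurableSet A := by
    have : A = ⋃ q : ℚ, ({x | x ∈ Set.Ioo a b ∧ (q:ℝ) < k x} ×ˢ Set.Ioo 0 ((q:ℝ) - ka)) := by
      ext ⟨x, s⟩
      simp only [Set.mem_iUnion, Set.mem_prod, Set.mem_setOf_eq, Set.mem_Ioo, hAdef]
      constructor
      · rintro ⟨hx, hs, hlt⟩
        obtain ⟨q, hq1, hq2⟩ := exists_rat_btwn hlt
        exact ⟨q, ⟨hx, hq2⟩, hs, by linarith⟩
      · rintro ⟨q, ⟨hx, hq⟩, hs1, hs2⟩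
        exact ⟨hx, hs1, by linarith⟩
    rw [this]
    exact MeasurableSet.iUnion fun q =>
      (upper_measurableSet hab' hkm).prod measurableSet_Ioo
  set F : ℝ × ℝ → ℝ := A.indicator (fun p => D p.1) with hFdef
  have hFm : Measurable F := (hDm.comp measurable_fst).indicator hA
  have hsec : ∀ x ∈ Set.Ioo a b,
      (fun s => F (x, s)) = (Set.Ioo 0 (k x - ka)).indicator (fun _ => D x) := by
    intro x hx
    funext s
    by_cases hs : s ∈ Set.Ioo 0 (k x - ka)
    · rw [Set.indicator_of_mem hs]
      exact Set.indicator_of_mem (by exact ⟨hx, hs.1, by have := hs.2; linarith⟩) _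
    · rw [Set.indicator_of_notMem hs]
      refine Set.indicator_of_notMem ?_ _
      rintro ⟨-, hs1, hs2⟩
      exact hs ⟨hs1, by linarith⟩
  have hsec' : ∀ x, x ∉ Set.Ioo a b → (fun s => F (x, s)) = fun _ => 0 := by
    intro x hx
    funext s
    refine Set.indicator_of_notMem ?_ _
    rintro ⟨h1, -⟩
    exact hx h1
  have hsecint : ∀ x ∈ Set.Ioo a b, (∫ s, F (x, s)) = (k x - ka) * D x := by
    intro x hx
    rw [hsec x hx, MeasureTheory.integral_indicator_const _ measurableSet_Ioo,
      measureReal_def, Real.volume_Ioo]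
    rw [ENNReal.toReal_ofReal (by linarith [hkale x hx] : (0:ℝ) ≤ k x - ka - 0)]
    simp [smul_eq_mul]
  have hsecnorm : ∀ x ∈ Set.Ioo a b, (∫ s, ‖F (x, s)‖) = (k x - ka) * |D x| := by
    intro x hx
    have : (fun s => ‖F (x, s)‖) = (Set.Ioo 0 (k x - ka)).indicator (fun _ => |D x|) := by
      rw [show (fun s => ‖F (x, s)‖) = fun s => ‖(fun s' => F (x, s')) s‖ from rfl, hsec x hx]
      funext s
      by_cases hs : s ∈ Set.Ioo 0 (k x - ka) <;>
        simp [Set.indicator_of_mem, Set.indicator_of_notMem, hs, Real.norm_eq_abs]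
    rw [this, MeasureTheory.integral_indicator_const _ measurableSet_Ioo, measureReal_def, Real.volume_Ioo]
    rw [ENNReal.toReal_ofReal (by linarith [hkale x hx] : (0:ℝ) ≤ k x - ka - 0)]
    simp [smul_eq_mul]
  -- integrability of F on the product
  have hFint : Integrable F (volume.prod volume) := by
    rw [MeasureTheory.integrable_prod_iff hFm.aestronglyMeasurable]
    constructor
    · refine Filter.Eventually.of_forall fun x => ?_
      by_cases hx : x ∈ Set.Ioo a b
      · rw [hsec x hx]
        rw [integrable_indicator_iff measurableSet_Ioo]
        exact integrableOn_const measure_Ioo_lt_top.ne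
      · rw [hsec' x hx]
        exact integrable_zero _ _ _
    · refine Integrable.mono' (g := (Set.Ioo a b).indicator fun _ => C * 2)
        ?_ ?_ ?_
      · rw [integrable_indicator_iff measurableSet_Ioo]
        exact integrableOn_const measure_Ioo_lt_top.ne
      · exact (hFm.norm.aestronglyMeasurable.integral_prod_right')
      · refine Filter.Eventually.of_forall fun x => ?_
        by_cases hx : x ∈ Set.Ioo a b
        · rw [hsecnorm x hx, Set.indicator_of_mem hx]
          rw [Real.norm_eq_abs, abs_of_nonneg
            (mul_nonneg (by linarith [hkale x hx]) (abs_nonneg _))]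
          exact mul_le_mul (by linarith [hkC x hx, hka0]) (hDb x) (abs_nonneg _) hC0
        · have hz : (fun y => ‖F (x, y)‖) = fun _ => (0:ℝ) := by
            funext y
            have h0 := congrFun (hsec' x hx) y
            rw [h0]
            simp
          rw [hz, Set.indicator_of_notMem hx]
          simp
  -- integrability of pieces on Ioo a b
  have hDint : IntegrableOn D (Set.Ioo a b) := by
    refine Integrable.mono' (g := fun _ => 2) (integrableOn_const measure_Ioo_lt_top.ne)
      hDm.aestronglyMeasurable.restrict (Filter.Eventually.of_forall fun x => ?_)
    rw [Real.norm_eq_abs]; exact hDb x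
  have hkaDint : IntegrableOn (fun x => ka * D x) (Set.Ioo a b) := hDint.const_mul ka
  have hkmaes : AEMeasurable k (volume.restrict (Set.Ioo a b)) :=
    aemeasurable_restrict_of_monotoneOn measurableSet_Ioo hkm
  have hkDint : IntegrableOn (fun x => (k x - ka) * D x) (Set.Ioo a b) := by
    refine Integrable.mono' (g := fun _ => C * 2) (integrableOn_const measure_Ioo_lt_top.ne)
      (((hkmaes.sub aemeasurable_const).mul hDm.aemeasurable.restrict).aestronglyMeasurable)
      ?_
    rw [MeasureTheory.ae_restrict_iff' measurableSet_Ioo]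
    refine Filter.Eventually.of_forall fun x hx => ?_
    rw [Real.norm_eq_abs, abs_mul]
    refine mul_le_mul ?_ (hDb x) (abs_nonneg _) hC0
    rw [abs_of_nonneg (by linarith [hkale x hx])]
    linarith [hkC x hx, hka0]
  -- main computation
  have hsplit : (∫ x in Set.Ioo a b, k x * D x)
      = (∫ x in Set.Ioo a b, ka * D x) + ∫ x in Set.Ioo a b, (k x - ka) * D x := by
    rw [← MeasureTheory.integral_add hkaDint hkDint]
    congr 1
    funext x
    ring
  have hpart1 : (∫ x in Set.Ioo a b, ka * D x) ≤ 0 := by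
    rw [MeasureTheory.integral_const_mul]
    have h1 : (∫ x in Set.Ioo a b, D x) = ∫ x in Set.Ioc a b, D x :=
      MeasureTheory.setIntegral_congr_set MeasureTheory.Ioo_ae_eq_Ioc
    have h2 : (∫ x in Set.Ioc a b, D x) ≤ 0 := hΦ a ⟨le_refl a, hab'⟩
    exact mul_nonpos_iff.2 (Or.inl ⟨hka0, by linarith⟩)
  have hpart2 : (∫ x in Set.Ioo a b, (k x - ka) * D x) ≤ 0 := by
    have e1 : (∫ x in Set.Ioo a b, (k x - ka) * D x) = ∫ x in Set.Ioo a b, (∫ s, F (x, s)) :=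
      MeasureTheory.setIntegral_congr_fun measurableSet_Ioo fun x hx => (hsecint x hx).symm
    have e2 : (∫ x in Set.Ioo a b, (∫ s, F (x, s))) = ∫ x, (∫ s, F (x, s)) := by
      apply MeasureTheory.setIntegral_eq_integral_of_forall_compl_eq_zero
      intro x hx
      rw [hsec' x hx]
      simp
    have e3 : (∫ x, (∫ s, F (x, s))) = ∫ s, (∫ x, F (x, s)) :=
      MeasureTheory.integral_integral_swap (f := fun x s => F (x, s)) (by exact hFint)
    rw [e1, e2, e3]
    refine MeasureTheory.integral_nonpos fun s => ?_
    by_cases hs : 0 < s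
    · have : (fun x => F (x, s)) = (S s).indicator D := by
        funext x
        by_cases hx : x ∈ S s
        · rw [Set.indicator_of_mem hx]
          exact Set.indicator_of_mem (by exact ⟨hx.1, hs, hx.2⟩) _
        · rw [Set.indicator_of_notMem hx]
          refine Set.indicator_of_notMem ?_ _
          rintro ⟨h1, -, h3⟩
          exact hx ⟨h1, h3⟩
      rw [this, MeasureTheory.integral_indicator (hSmeas s)]
      exact hSint s
    · have : (fun x => F (x, s)) = fun _ => 0 := by
        funext x
        refine Set.indicator_of_notMem ?_ _
        rintro ⟨-, h2, -⟩
        exact hs h2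
      rw [this]
      simp
  linarith [hsplit, hpart1, hpart2]

end Abel

section Core

lemma integrableOn_of_bdd {f : ℝ → ℝ} {M : ℝ} (hf : Measurable f) (hb : ∀ x, |f x| ≤ M)
    {s : Set ℝ} (hs : MeasurableSet s) (hfin : volume s < ⊤) : IntegrableOn f s := by
  refine Integrable.mono' (g := fun _ => M) (integrableOn_const hfin.ne)
    hf.aestronglyMeasurable.restrict (Filter.Eventually.of_forall fun x => ?_)
  rw [Real.norm_eq_abs]; exact hb x

lemma ae_ne_real (b : ℝ) : ∀ᵐ x : ℝ ∂volume, x ≠ b := by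
  rw [MeasureTheory.ae_iff]
  simp only [ne_eq, not_not, Set.setOf_eq_eq_singleton]
  exact measure_singleton b

lemma core_bounded {a b : ℝ} {G H ψ : ℝ → ℝ} {C : ℝ}
    (hG : Antitone G) (hH : Antitone H)
    (hG01 : ∀ x, G x ∈ Set.Icc (0:ℝ) 1) (hH01 : ∀ x, H x ∈ Set.Icc (0:ℝ) 1)
    (hψm : MonotoneOn ψ (Set.Icc 0 1)) (hψc : ConcaveOn ℝ (Set.Icc 0 1) ψ)
    (hψ0 : ψ 0 = 0) (hψrange : ∀ t ∈ Set.Icc (0:ℝ) 1, ψ t ∈ Set.Icc (0:ℝ) 1)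
    (hK : ∀ u ∈ Set.Ioc (0:ℝ) 1, Kslope ψ u ≤ C)
    (hsl : ∀ t, (∫ x in Set.Ioc t b, G x) ≤ ∫ x in Set.Ioc t b, H x) :
    (∫ x in Set.Ioc a b, ψ (G x)) ≤ ∫ x in Set.Ioc a b, ψ (H x) := by
  by_cases hab : a < b
  swap
  · rw [Set.Ioc_eq_empty hab]
    simp
  have hab' : a ≤ b := hab.le
  -- basic properties
  have hψG_anti : Antitone fun x => ψ (G x) :=
    fun x y h => hψm (hG01 y) (hG01 x) (hG h)
  have hψH_anti : Antitone fun x => ψ (H x) :=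
    fun x y h => hψm (hH01 y) (hH01 x) (hH h)
  have hψGb : ∀ x, |ψ (G x)| ≤ 1 := fun x => by
    have := hψrange _ (hG01 x); rw [abs_le]; constructor <;> [linarith [this.1]; exact this.2]
  have hψHb : ∀ x, |ψ (H x)| ≤ 1 := fun x => by
    have := hψrange _ (hH01 x); rw [abs_le]; constructor <;> [linarith [this.1]; exact this.2]
  have hGb : ∀ x, |G x| ≤ 1 := fun x => by
    have := hG01 x; rw [abs_le]; constructor <;> [linarith [this.1]; exact this.2]
  have hHb : ∀ x, |H x| ≤ 1 := fun x => by
    have := hH01 x; rw [abs_le]; constructor <;> [linarith [this.1]; exact this.2]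
  have hintG : ∀ s t : ℝ, IntegrableOn G (Set.Ioc s t) :=
    fun s t => integrableOn_of_bdd hG.measurable hGb measurableSet_Ioc
      (by rw [Real.volume_Ioc]; exact ENNReal.ofReal_lt_top)
  have hintH : ∀ s t : ℝ, IntegrableOn H (Set.Ioc s t) :=
    fun s t => integrableOn_of_bdd hH.measurable hHb measurableSet_Ioc
      (by rw [Real.volume_Ioc]; exact ENNReal.ofReal_lt_top)
  have hintψG : ∀ s t : ℝ, IntegrableOn (fun x => ψ (G x)) (Set.Ioc s t) :=
    fun s t => integrableOn_of_bdd hψG_anti.measurable hψGb measurableSet_Ioc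
      (by rw [Real.volume_Ioc]; exact ENNReal.ofReal_lt_top)
  have hintψH : ∀ s t : ℝ, IntegrableOn (fun x => ψ (H x)) (Set.Ioc s t) :=
    fun s t => integrableOn_of_bdd hψH_anti.measurable hψHb measurableSet_Ioc
      (by rw [Real.volume_Ioc]; exact ENNReal.ofReal_lt_top)
  -- the point where H hits 0
  set T : Set ℝ := (Set.Icc a b ∩ {x | H x = 0}) ∪ {b} with hT
  have hTne : T.Nonempty := ⟨b, Or.inr rfl⟩
  have hTbdd : BddBelow T := by
    refine ⟨a, ?_⟩
    rintro y (hy | hy)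
    · exact hy.1.1
    · rw [Set.mem_singleton_iff] at hy; subst hy; exact hab'
  set t0 := sInf T with ht0def
  have ht0 : t0 ∈ Set.Icc a b := by
    constructor
    · refine le_csInf hTne ?_
      rintro y (hy | hy)
      · exact hy.1.1
      · rw [Set.mem_singleton_iff] at hy; subst hy; exact hab'
    · exact csInf_le hTbdd (Or.inr rfl)
  have Hz : ∀ x, t0 < x → x ≤ b → H x = 0 := by
    intro x hx hxb
    obtain ⟨y, hy, hyx⟩ := exists_lt_of_csInf_lt hTne hx
    rcases hy with hy | hy
    · have h1 : H x ≤ H y := hH hyx.le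
      have h2 := (hH01 x).1
      rw [hy.2] at h1
      linarith
    · rw [Set.mem_singleton_iff] at hy; subst hy
      exact absurd (hyx.trans_le hxb) (lt_irrefl y)
  have Gz : ∀ x, t0 < x → x < b → G x = 0 := by
    intro x hx hxb
    by_contra hGx
    have hGx' : 0 < G x := lt_of_le_of_ne (hG01 x).1 (Ne.symm hGx)
    set t := (t0 + x) / 2 with htdef
    have h1 : t0 < t := by rw [htdef]; linarith
    have h2 : t < x := by rw [htdef]; linarith
    have hH0 : (∫ y in Set.Ioc t b, H y) = 0 := by
      rw [MeasureTheory.setIntegral_congr_fun measurableSet_Ioc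
        (g := fun _ => (0:ℝ)) fun y hy => Hz y (h1.trans hy.1) hy.2]
      simp
    have hlow : G x * (x - t) ≤ ∫ y in Set.Ioc t b, G y := by
      have s1 : (∫ y in Set.Ioc t x, (fun _ => G x) y) ≤ ∫ y in Set.Ioc t x, G y := by
        refine MeasureTheory.setIntegral_mono_on
          (integrableOn_const (by rw [Real.volume_Ioc]; exact ENNReal.ofReal_ne_top))
          (hintG t x) measurableSet_Ioc fun y hy => ?_
        exact hG hy.2
      have s2 : (∫ y in Set.Ioc t x, G y) ≤ ∫ y in Set.Ioc t b, G y := by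
        refine MeasureTheory.setIntegral_mono_set (hintG t b) ?_ ?_
        · exact Filter.Eventually.of_forall fun y => (hG01 y).1
        · exact (Set.Ioc_subset_Ioc_right hxb.le).eventuallyLE
      have s3 : (∫ y in Set.Ioc t x, (fun _ => G x) y) = G x * (x - t) := by
        rw [MeasureTheory.setIntegral_const, measureReal_def, Real.volume_Ioc,
          ENNReal.toReal_ofReal (by linarith), smul_eq_mul]
        ring
      linarith
    have := hsl t
    rw [hH0] at this
    nlinarith
  have Hpos : ∀ x, a ≤ x → x < t0 → 0 < H x := by
    intro x hxa hxt0
    rcases lt_or_eq_of_le (hH01 x).1 with h | h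
    · exact h
    · exfalso
      have : x ∈ T := Or.inl ⟨⟨hxa, hxt0.le.trans ht0.2⟩, h.symm⟩
      exact absurd (csInf_le hTbdd this) (not_le.2 hxt0)
  -- integrals over Ioc t0 b agree
  have heqtail : ∀ {f g : ℝ → ℝ}, (∀ x, t0 < x → x < b → f x = g x) →
      (∫ x in Set.Ioc t0 b, f x) = ∫ x in Set.Ioc t0 b, g x := by
    intro f g hfg
    refine MeasureTheory.setIntegral_congr_ae measurableSet_Ioc ?_
    filter_upwards [ae_ne_real b] with x hxb hx
    exact hfg x hx.1 (lt_of_le_of_ne hx.2 hxb)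
  have htail : (∫ x in Set.Ioc t0 b, ψ (G x)) = ∫ x in Set.Ioc t0 b, ψ (H x) :=
    heqtail fun x h1 h2 => by rw [Gz x h1 h2, Hz x h1 h2.le]
  have hsplitG : (∫ x in Set.Ioc a b, ψ (G x))
      = (∫ x in Set.Ioc a t0, ψ (G x)) + ∫ x in Set.Ioc t0 b, ψ (G x) := by
    rw [← Set.Ioc_union_Ioc_eq_Ioc ht0.1 ht0.2]
    exact MeasureTheory.setIntegral_union (Set.Ioc_disjoint_Ioc_of_le le_rfl) measurableSet_Ioc
      (hintψG a t0) (hintψG t0 b)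
  have hsplitH : (∫ x in Set.Ioc a b, ψ (H x))
      = (∫ x in Set.Ioc a t0, ψ (H x)) + ∫ x in Set.Ioc t0 b, ψ (H x) := by
    rw [← Set.Ioc_union_Ioc_eq_Ioc ht0.1 ht0.2]
    exact MeasureTheory.setIntegral_union (Set.Ioc_disjoint_Ioc_of_le le_rfl) measurableSet_Ioc
      (hintψH a t0) (hintψH t0 b)
  -- main inequality on Ioc a t0
  have hmain : (∫ x in Set.Ioc a t0, ψ (G x)) ≤ ∫ x in Set.Ioc a t0, ψ (H x) := by
    by_cases hat0 : a < t0
    swap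
    · rw [Set.Ioc_eq_empty hat0]
      simp
    set k : ℝ → ℝ := fun x => Kslope ψ (H x) with hkdef
    set D : ℝ → ℝ := fun x => G x - H x with hDdef
    have hHmem : ∀ x ∈ Set.Ioo a t0, H x ∈ Set.Ioc (0:ℝ) 1 :=
      fun x hx => ⟨Hpos x hx.1.le hx.2, (hH01 x).2⟩
    have hptw : ∀ x ∈ Set.Ioo a t0, ψ (G x) - ψ (H x) ≤ k x * D x := by
      intro x hx
      have := Kslope_support hψm hψc (hHmem x hx) (G x) (hG01 x)
      simp only [hkdef, hDdef]
      linarith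
    have hkmono : MonotoneOn k (Set.Ioo a t0) := by
      intro x hx y hy hxy
      exact Kslope_anti hψm hψc (hHmem y hy) (hHmem x hx) (hH hxy)
    have hk0 : ∀ x ∈ Set.Ioo a t0, 0 ≤ k x := fun x hx => Kslope_nonneg hψm (hHmem x hx)
    have hkC : ∀ x ∈ Set.Ioo a t0, k x ≤ C := fun x hx => hK _ (hHmem x hx)
    have hDm : Measurable D := hG.measurable.sub hH.measurable
    have hDb : ∀ x, |D x| ≤ 2 := by
      intro x
      have h1 := hG01 x; have h2 := hH01 x
      have hDx : D x = G x - H x := rfl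
      rw [hDx, abs_le]
      exact ⟨by linarith [h1.1, h2.2], by linarith [h1.2, h2.1]⟩
    have hΦ : ∀ t ∈ Set.Icc a t0, (∫ x in Set.Ioc t t0, D x) ≤ 0 := by
      intro t htm
      have hb1 : (∫ x in Set.Ioc t b, D x)
          = (∫ x in Set.Ioc t t0, D x) + ∫ x in Set.Ioc t0 b, D x := by
        rw [← Set.Ioc_union_Ioc_eq_Ioc htm.2 ht0.2]
        exact MeasureTheory.setIntegral_union (Set.Ioc_disjoint_Ioc_of_le le_rfl) measurableSet_Ioc
          ((hintG t t0).sub (hintH t t0)) ((hintG t0 b).sub (hintH t0 b))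
      have hb2 : (∫ x in Set.Ioc t0 b, D x) = 0 := by
        rw [heqtail (g := fun _ => (0:ℝ)) fun x h1 h2 => by
          simp only [hDdef]; rw [Gz x h1 h2, Hz x h1 h2.le]; ring]
        simp
      have hb3 : (∫ x in Set.Ioc t b, D x) ≤ 0 := by
        have := hsl t
        have heq : (∫ x in Set.Ioc t b, D x)
            = (∫ x in Set.Ioc t b, G x) - ∫ x in Set.Ioc t b, H x :=
          MeasureTheory.integral_sub (hintG t b) (hintH t b)
        linarith
      linarith [hb1, hb2, hb3]
    have habel : (∫ x in Set.Ioo a t0, k x * D x) ≤ 0 :=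
      abel_le hkmono hk0 hkC hDm hDb hΦ
    -- integrability of k * D on Ioo a t0
    have hkaes : AEMeasurable k (volume.restrict (Set.Ioo a t0)) :=
      aemeasurable_restrict_of_monotoneOn measurableSet_Ioo hkmono
    have hC0 : 0 ≤ C := by
      obtain ⟨x, hx⟩ := Set.nonempty_Ioo.2 hat0
      exact (hk0 x hx).trans (hkC x hx)
    have hkDint : IntegrableOn (fun x => k x * D x) (Set.Ioo a t0) := by
      refine Integrable.mono' (g := fun _ => C * 2)
        (integrableOn_const (by rw [Real.volume_Ioo]; exact ENNReal.ofReal_ne_top))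
        ((hkaes.mul hDm.aemeasurable.restrict).aestronglyMeasurable) ?_
      rw [MeasureTheory.ae_restrict_iff' measurableSet_Ioo]
      refine Filter.Eventually.of_forall fun x hx => ?_
      rw [Real.norm_eq_abs, abs_mul, abs_of_nonneg (hk0 x hx)]
      exact mul_le_mul (hkC x hx) (hDb x) (abs_nonneg _) hC0
    have hsub : (∫ x in Set.Ioo a t0, (ψ (G x) - ψ (H x)))
        ≤ ∫ x in Set.Ioo a t0, k x * D x := by
      refine MeasureTheory.setIntegral_mono_on
        (((hintψG a t0).mono_set Set.Ioo_subset_Ioc_self).sub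
          ((hintψH a t0).mono_set Set.Ioo_subset_Ioc_self))
        hkDint measurableSet_Ioo hptw
    have hdiff : (∫ x in Set.Ioc a t0, ψ (G x)) - (∫ x in Set.Ioc a t0, ψ (H x))
        = ∫ x in Set.Ioo a t0, (ψ (G x) - ψ (H x)) := by
      rw [MeasureTheory.integral_Ioc_eq_integral_Ioo, MeasureTheory.integral_Ioc_eq_integral_Ioo,
        ← MeasureTheory.integral_sub ((hintψG a t0).mono_set Set.Ioo_subset_Ioc_self)
          ((hintψH a t0).mono_set Set.Ioo_subset_Ioc_self)]
    linarith [hsub, habel, hdiff]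
  linarith [hsplitG, hsplitH, htail, hmain]

end Core

lemma core_main {a b : ℝ} {G H ψ : ℝ → ℝ}
    (hG : Antitone G) (hH : Antitone H)
    (hG01 : ∀ x, G x ∈ Set.Icc (0:ℝ) 1) (hH01 : ∀ x, H x ∈ Set.Icc (0:ℝ) 1)
    (hψm : MonotoneOn ψ (Set.Icc 0 1)) (hψc : ConcaveOn ℝ (Set.Icc 0 1) ψ)
    (hψ0 : ψ 0 = 0) (hψrange : ∀ t ∈ Set.Icc (0:ℝ) 1, ψ t ∈ Set.Icc (0:ℝ) 1)
    (hsl : ∀ t, (∫ x in Set.Ioc t b, G x) ≤ ∫ x in Set.Ioc t b, H x) :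
    (∫ x in Set.Ioc a b, ψ (G x)) ≤ ∫ x in Set.Ioc a b, ψ (H x) := by
  set ψn : ℕ → ℝ → ℝ := fun n u => min (ψ u) ((n:ℝ) * u) with hψndef
  have hn0 : ∀ n : ℕ, (0:ℝ) ≤ (n:ℝ) := fun n => Nat.cast_nonneg n
  have hψnm : ∀ n, MonotoneOn (ψn n) (Set.Icc (0:ℝ) 1) := by
    intro n x hx y hy h
    exact min_le_min (hψm hx hy h) (mul_le_mul_of_nonneg_left h (hn0 n))
  have hψnc : ∀ n, ConcaveOn ℝ (Set.Icc (0:ℝ) 1) (ψn n) := by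
    intro n
    have hlin : ConcaveOn ℝ (Set.Icc (0:ℝ) 1) (fun u => (n:ℝ) * u) :=
      ⟨convex_Icc 0 1, fun x _ y _ p q _ _ _ => le_of_eq (by simp [smul_eq_mul]; ring)⟩
    exact hψc.inf hlin
  have hψn0 : ∀ n, ψn n 0 = 0 := by
    intro n; simp [hψndef, hψ0]
  have hψnrange : ∀ n, ∀ t ∈ Set.Icc (0:ℝ) 1, ψn n t ∈ Set.Icc (0:ℝ) 1 := by
    intro n t ht
    refine ⟨le_min (hψrange t ht).1 (mul_nonneg (hn0 n) ht.1), ?_⟩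
    exact (min_le_left _ _).trans (hψrange t ht).2
  have hψnK : ∀ n : ℕ, ∀ u ∈ Set.Ioc (0:ℝ) 1, Kslope (ψn n) u ≤ (n:ℝ) := by
    intro n u hu
    have h1 := Kslope_mul_le (hψnm n) (hψnc n) hu (hψn0 n)
    have h2 : ψn n u ≤ (n:ℝ) * u := min_le_right _ _
    nlinarith [hu.1]
  have hstep : ∀ n : ℕ, (∫ x in Set.Ioc a b, ψn n (G x)) ≤ ∫ x in Set.Ioc a b, ψn n (H x) :=
    fun n => core_bounded hG hH hG01 hH01 (hψnm n) (hψnc n) (hψn0 n) (hψnrange n)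
      (hψnK n) hsl
  -- limits
  have hlim : ∀ u ∈ Set.Icc (0:ℝ) 1,
      Filter.Tendsto (fun n : ℕ => ψn n u) Filter.atTop (nhds (ψ u)) := by
    intro u hu
    rcases eq_or_lt_of_le hu.1 with h | h
    · have : ∀ n : ℕ, ψn n u = ψ u := by
        intro n; rw [← h]; simp [hψndef, hψ0]
      simp only [this]
      exact tendsto_const_nhds
    · refine tendsto_atTop_of_eventually_const (i₀ := ⌈1/u⌉₊) fun n hn => ?_
      have h1 : (1:ℝ)/u ≤ (n:ℝ) := le_trans (Nat.le_ceil _) (Nat.cast_le.2 hn)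
      have h2 : (1:ℝ) ≤ (n:ℝ) * u := by
        rw [div_le_iff₀ h] at h1
        linarith
      have h3 : ψ u ≤ (n:ℝ) * u := le_trans (hψrange u hu).2 h2
      exact min_eq_left h3
  have hmeas : ∀ n, Antitone fun x => ψn n (G x) :=
    fun n x y h => (hψnm n) (hG01 y) (hG01 x) (hG h)
  have hmeasH : ∀ n, Antitone fun x => ψn n (H x) :=
    fun n x y h => (hψnm n) (hH01 y) (hH01 x) (hH h)
  have hb : ∀ (n : ℕ) (f : ℝ → ℝ), (∀ x, f x ∈ Set.Icc (0:ℝ) 1) →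
      ∀ᵐ x ∂(volume.restrict (Set.Ioc a b)), ‖ψn n (f x)‖ ≤ (fun _ => (1:ℝ)) x := by
    intro n f hf
    refine Filter.Eventually.of_forall fun x => ?_
    have := hψnrange n (f x) (hf x)
    rw [Real.norm_eq_abs, abs_le]
    exact ⟨by show -(1:ℝ) ≤ _; linarith [this.1], this.2⟩
  have hboundint : Integrable (fun _ : ℝ => (1:ℝ)) (volume.restrict (Set.Ioc a b)) :=
    integrableOn_const (by rw [Real.volume_Ioc]; exact ENNReal.ofReal_ne_top)
  have htendG : Filter.Tendsto (fun n => ∫ x in Set.Ioc a b, ψn n (G x)) Filter.atTop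
      (nhds (∫ x in Set.Ioc a b, ψ (G x))) := by
    refine MeasureTheory.tendsto_integral_of_dominated_convergence _
      (fun n => (hmeas n).measurable.aestronglyMeasurable) hboundint
      (fun n => hb n G hG01) ?_
    exact Filter.Eventually.of_forall fun x => hlim (G x) (hG01 x)
  have htendH : Filter.Tendsto (fun n => ∫ x in Set.Ioc a b, ψn n (H x)) Filter.atTop
      (nhds (∫ x in Set.Ioc a b, ψ (H x))) := by
    refine MeasureTheory.tendsto_integral_of_dominated_convergence _
      (fun n => (hmeasH n).measurable.aestronglyMeasurable) hboundint
      (fun n => hb n H hH01) ?_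
    exact Filter.Eventually.of_forall fun x => hlim (H x) (hH01 x)
  exact le_of_tendsto_of_tendsto' htendG htendH hstep

section Reduce

lemma abs_le_one_of_mem_Icc {y : ℝ} (h : y ∈ Set.Icc (0:ℝ) 1) : |y| ≤ 1 := by
  rw [abs_le]; exact ⟨by linarith [h.1], h.2⟩

lemma integral_Ioi_eq_Ioc {G : ℝ → ℝ} {t M : ℝ} (hG : Antitone G)
    (hG01 : ∀ x, G x ∈ Set.Icc (0:ℝ) 1) (h0 : ∀ x, M < x → G x = 0) :
    (∫ x in Set.Ioi t, G x) = ∫ x in Set.Ioc t M, G x := by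
  have hGb : ∀ x, |G x| ≤ 1 := fun x => abs_le_one_of_mem_Icc (hG01 x)
  have htail : (∫ x in Set.Ioi M, G x) = 0 := by
    rw [MeasureTheory.setIntegral_congr_fun measurableSet_Ioi
      (g := fun _ => (0:ℝ)) fun x hx => h0 x hx]
    simp
  rcases le_or_gt t M with h | h
  · rw [← Set.Ioc_union_Ioi_eq_Ioi h,
      MeasureTheory.setIntegral_union Set.Ioc_disjoint_Ioi_same measurableSet_Ioi
        (integrableOn_of_bdd hG.measurable hGb measurableSet_Ioc
          (by rw [Real.volume_Ioc]; exact ENNReal.ofReal_lt_top))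
        (by
          refine (integrableOn_congr_fun (g := fun _ => (0:ℝ)) ?_ measurableSet_Ioi).2
            (integrableOn_zero)
          exact fun x hx => h0 x hx),
      htail, add_zero]
  · rw [Set.Ioc_eq_empty (not_lt.2 h.le), MeasureTheory.setIntegral_empty]
    rw [MeasureTheory.setIntegral_congr_fun measurableSet_Ioi
      (g := fun _ => (0:ℝ)) fun x hx => h0 x (h.trans hx)]
    simp

lemma reduce_rd {f : ℝ → ℝ} {M : ℝ} (hM : 0 < M) (hf : Antitone f)
    (hf01 : ∀ x, f x ∈ Set.Icc (0:ℝ) 1)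
    (h0 : ∀ x, M < x → f x = 0) (h1 : ∀ x, x < -M → f x = 1) :
    (∫ x in Set.Ioi (0:ℝ), f x) + (∫ x in Set.Iio (0:ℝ), (f x - 1))
      = (∫ x in Set.Ioc (-M) M, f x) - M := by
  have hfb : ∀ x, |f x| ≤ 1 := fun x => abs_le_one_of_mem_Icc (hf01 x)
  have hint : ∀ s t : ℝ, IntegrableOn f (Set.Ioc s t) :=
    fun s t => integrableOn_of_bdd hf.measurable hfb measurableSet_Ioc
      (by rw [Real.volume_Ioc]; exact ENNReal.ofReal_lt_top)
  have e1 : (∫ x in Set.Ioi (0:ℝ), f x) = ∫ x in Set.Ioc (0:ℝ) M, f x :=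
    integral_Ioi_eq_Ioc hf hf01 h0
  have hintm : IntegrableOn (fun x => f x - 1) (Set.Ico (-M) (0:ℝ)) := by
    refine integrableOn_of_bdd (M := 2) (hf.measurable.sub measurable_const)
      (fun x => ?_) measurableSet_Ico
      (by rw [Real.volume_Ico]; exact ENNReal.ofReal_lt_top)
    have := hf01 x
    show |f x - 1| ≤ 2; rw [abs_le]
    exact ⟨by linarith [this.1], by linarith [this.2]⟩
  have e2 : (∫ x in Set.Iio (0:ℝ), (f x - 1)) = ∫ x in Set.Ioc (-M) (0:ℝ), (f x - 1) := by
    have hsplit : Set.Iio (0:ℝ) = Set.Iio (-M) ∪ Set.Ico (-M) 0 :=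
      (Set.Iio_union_Ico_eq_Iio (by linarith)).symm
    have hz : (∫ x in Set.Iio (-M), (f x - 1)) = 0 := by
      rw [MeasureTheory.setIntegral_congr_fun measurableSet_Iio
        (g := fun _ => (0:ℝ)) fun x hx => by rw [h1 x hx]; ring]
      simp
    have hico : (∫ x in Set.Ico (-M) (0:ℝ), (f x - 1)) = ∫ x in Set.Ioc (-M) (0:ℝ), (f x - 1) := by
      rw [MeasureTheory.integral_Ico_eq_integral_Ioo, MeasureTheory.integral_Ioc_eq_integral_Ioo]
    have hdisj : Disjoint (Set.Iio (-M)) (Set.Ico (-M) (0:ℝ)) :=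
      Set.disjoint_left.2 fun x hx hx2 => absurd hx2.1 (not_le.2 hx)
    rw [hsplit, MeasureTheory.setIntegral_union hdisj measurableSet_Ico
      (by
        refine (integrableOn_congr_fun (g := fun _ => (0:ℝ)) ?_ measurableSet_Iio).2
          integrableOn_zero
        exact fun x hx => by rw [h1 x hx]; ring)
      hintm, hz, zero_add, hico]
  have e3 : (∫ x in Set.Ioc (-M) (0:ℝ), (f x - 1))
      = (∫ x in Set.Ioc (-M) (0:ℝ), f x) - M := by
    rw [MeasureTheory.integral_sub (hint (-M) 0)
      (integrableOn_const (by rw [Real.volume_Ioc]; exact ENNReal.ofReal_ne_top))]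
    rw [MeasureTheory.setIntegral_const, measureReal_def, Real.volume_Ioc,
      ENNReal.toReal_ofReal (by linarith), smul_eq_mul]
    ring
  have e4 : (∫ x in Set.Ioc (-M) M, f x)
      = (∫ x in Set.Ioc (-M) (0:ℝ), f x) + ∫ x in Set.Ioc (0:ℝ) M, f x := by
    rw [← Set.Ioc_union_Ioc_eq_Ioc (by linarith : -M ≤ (0:ℝ)) hM.le]
    exact MeasureTheory.setIntegral_union (Set.Ioc_disjoint_Ioc_of_le le_rfl) measurableSet_Ioc
      (hint (-M) 0) (hint 0 M)
  rw [e1, e2, e3, e4]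
  ring

end Reduce

section Choq

lemma choquet_pos_part {Ω : Type*} (c : Set Ω → ℝ) (hc : IsCapacity c) (X : Ω → ℝ) (t M : ℝ)
    (hanti : Antitone fun x => c {ω' | X ω' > x})
    (h01 : ∀ x, c {ω' | X ω' > x} ∈ Set.Icc (0:ℝ) 1)
    (h0 : ∀ x, M < x → c {ω' | X ω' > x} = 0) :
    choquet c (fun ω => max (X ω - t) 0) = ∫ x in Set.Ioc t M, c {ω' | X ω' > x} := by
  unfold choquet
  have hterm2 : (∫ x in Set.Iio (0:ℝ), (c {ω | max (X ω - t) 0 > x} - 1)) = 0 := by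
    rw [MeasureTheory.setIntegral_congr_fun measurableSet_Iio (g := fun _ => (0:ℝ)) ?_]
    · simp
    · intro x hx
      have hset : {ω | max (X ω - t) 0 > x} = Set.univ := by
        ext ω'
        simp only [Set.mem_setOf_eq, Set.mem_univ, iff_true]
        exact lt_of_lt_of_le hx (le_max_right _ _)
      show c {ω | max (X ω - t) 0 > x} - 1 = 0
      rw [hset, hc.2.1]
      ring
  have hterm1 : (∫ x in Set.Ioi (0:ℝ), c {ω | max (X ω - t) 0 > x})
      = ∫ x in Set.Ioi (0:ℝ), c {ω' | X ω' > t + x} := by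
    refine MeasureTheory.setIntegral_congr_fun measurableSet_Ioi fun x hx => ?_
    congr 1
    ext ω'
    simp only [Set.mem_setOf_eq]
    rw [show ((max (X ω' - t) 0 > x) ↔ (x < X ω' - t ∨ x < 0)) from lt_max_iff]
    constructor
    · rintro (h1 | h1)
      · linarith
      · exact absurd h1 (not_lt.2 (le_of_lt hx))
    · intro h; exact Or.inl (by linarith)
  have htrans : (∫ x in Set.Ioi (0:ℝ), c {ω' | X ω' > t + x})
      = ∫ x in Set.Ioi t, c {ω' | X ω' > x} := by
    rw [← MeasureTheory.integral_indicator measurableSet_Ioi,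
      ← MeasureTheory.integral_indicator (measurableSet_Ioi (a := t))]
    have : (Set.Ioi (0:ℝ)).indicator (fun x => c {ω' | X ω' > t + x})
        = fun x => (Set.Ioi t).indicator (fun x => c {ω' | X ω' > x}) (t + x) := by
      funext x
      rw [Set.indicator_apply, Set.indicator_apply]
      have hiff : x ∈ Set.Ioi (0:ℝ) ↔ t + x ∈ Set.Ioi t := by simp
      by_cases hx : x ∈ Set.Ioi (0:ℝ)
      · rw [if_pos hx, if_pos (hiff.1 hx)]
      · rw [if_neg hx, if_neg fun h => hx (hiff.2 h)]
    rw [this, MeasureTheory.integral_add_left_eq_self _ t]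
  rw [hterm2, hterm1, htrans, add_zero]
  exact integral_Ioi_eq_Ioc hanti h01 h0

end Choq

theorem stmt18 {Ω : Type*} [mF : MeasurableSpace Ω] (mG : MeasurableSpace Ω) (hG : mG ≤ mF)
    (c : Set Ω → ℝ) (hc : IsCapacity c)
    (φ : Ω → ℝ → ℝ) (hφ : IsRandDistortion mG φ)
    (hconc : ∀ ω, ConcaveOn ℝ (Set.Icc (0:ℝ) 1) (φ ω))
    (X Y : Ω → ℝ) (hX : BddMeas X) (hY : BddMeas Y)
    (hsl : ∀ b : ℝ, choquet c (fun ω => max (X ω - b) 0)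
      ≤ choquet c (fun ω => max (Y ω - b) 0)) :
    ∀ ω, rdChoquet φ c X ω ≤ rdChoquet φ c Y ω := by
  intro ω
  obtain ⟨hc0, hc1, hcm⟩ := hc
  obtain ⟨hφ0, hφ1, hφmono, hφrange, -⟩ := hφ
  obtain ⟨-, MX, hMX⟩ := hX
  obtain ⟨-, MY, hMY⟩ := hY
  set ψ : ℝ → ℝ := φ ω with hψdef
  set G : ℝ → ℝ := fun x => c {ω' | X ω' > x} with hGdef
  set H : ℝ → ℝ := fun x => c {ω' | Y ω' > x} with hHdef
  set M : ℝ := max MX MY + 1 with hMdef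
  have hMX0 : 0 ≤ MX := (abs_nonneg _).trans (hMX ω)
  have hM : 0 < M := by
    have : 0 ≤ max MX MY := le_trans hMX0 (le_max_left _ _)
    rw [hMdef]; linarith
  have hGanti : Antitone G := by
    intro x y hxy
    exact hcm _ _ fun ω' (h : y < X ω') => lt_of_le_of_lt hxy h
  have hHanti : Antitone H := by
    intro x y hxy
    exact hcm _ _ fun ω' (h : y < Y ω') => lt_of_le_of_lt hxy h
  have hmem01 : ∀ A : Set Ω, c A ∈ Set.Icc (0:ℝ) 1 := by
    intro A
    constructor
    · rw [← hc0]; exact hcm _ _ (Set.empty_subset A)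
    · rw [← hc1]; exact hcm _ _ (Set.subset_univ A)
  have hG01 : ∀ x, G x ∈ Set.Icc (0:ℝ) 1 := fun x => hmem01 _
  have hH01 : ∀ x, H x ∈ Set.Icc (0:ℝ) 1 := fun x => hmem01 _
  have hGz : ∀ x, M < x → G x = 0 := by
    intro x hx
    have : {ω' | X ω' > x} = (∅ : Set Ω) := by
      ext ω'
      simp only [Set.mem_setOf_eq, Set.mem_empty_iff_false, iff_false, not_lt]
      have h1 : X ω' ≤ MX := le_trans (le_abs_self _) (hMX ω')
      have h2 : MX ≤ max MX MY := le_max_left _ _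
      rw [hMdef] at hx
      linarith
    rw [hGdef]; simp only; rw [this, hc0]
  have hHz : ∀ x, M < x → H x = 0 := by
    intro x hx
    have : {ω' | Y ω' > x} = (∅ : Set Ω) := by
      ext ω'
      simp only [Set.mem_setOf_eq, Set.mem_empty_iff_false, iff_false, not_lt]
      have h1 : Y ω' ≤ MY := le_trans (le_abs_self _) (hMY ω')
      have h2 : MY ≤ max MX MY := le_max_right _ _
      rw [hMdef] at hx
      linarith
    rw [hHdef]; simp only; rw [this, hc1] at *; rw [this, hc0]
  have hGo : ∀ x, x < -M → G x = 1 := by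
    intro x hx
    have : {ω' | X ω' > x} = (Set.univ : Set Ω) := by
      ext ω'
      simp only [Set.mem_setOf_eq, Set.mem_univ, iff_true]
      have h1 : -MX ≤ X ω' := neg_le_of_abs_le (hMX ω')
      have h2 : MX ≤ max MX MY := le_max_left _ _
      rw [hMdef] at hx
      linarith
    rw [hGdef]; simp only; rw [this, hc1]
  have hHo : ∀ x, x < -M → H x = 1 := by
    intro x hx
    have : {ω' | Y ω' > x} = (Set.univ : Set Ω) := by
      ext ω'
      simp only [Set.mem_setOf_eq, Set.mem_univ, iff_true]
      have h1 : -MY ≤ Y ω' := neg_le_of_abs_le (hMY ω')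
      have h2 : MY ≤ max MX MY := le_max_right _ _
      rw [hMdef] at hx
      linarith
    rw [hHdef]; simp only; rw [this, hc1]
  -- properties of ψ
  have hψm : MonotoneOn ψ (Set.Icc (0:ℝ) 1) := hφmono ω
  have hψc : ConcaveOn ℝ (Set.Icc (0:ℝ) 1) ψ := hconc ω
  have hψ0 : ψ 0 = 0 := hφ0 ω
  have hψ1 : ψ 1 = 1 := hφ1 ω
  have hψrange : ∀ t ∈ Set.Icc (0:ℝ) 1, ψ t ∈ Set.Icc (0:ℝ) 1 := hφrange ω
  -- properties of ψ ∘ G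
  have hfG : Antitone fun x => ψ (G x) := fun x y h => hψm (hG01 y) (hG01 x) (hGanti h)
  have hfH : Antitone fun x => ψ (H x) := fun x y h => hψm (hH01 y) (hH01 x) (hHanti h)
  have hfG01 : ∀ x, ψ (G x) ∈ Set.Icc (0:ℝ) 1 := fun x => hψrange _ (hG01 x)
  have hfH01 : ∀ x, ψ (H x) ∈ Set.Icc (0:ℝ) 1 := fun x => hψrange _ (hH01 x)
  have hfGz : ∀ x, M < x → ψ (G x) = 0 := fun x hx => by rw [hGz x hx, hψ0]
  have hfHz : ∀ x, M < x → ψ (H x) = 0 := fun x hx => by rw [hHz x hx, hψ0]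
  have hfGo : ∀ x, x < -M → ψ (G x) = 1 := fun x hx => by rw [hGo x hx, hψ1]
  have hfHo : ∀ x, x < -M → ψ (H x) = 1 := fun x hx => by rw [hHo x hx, hψ1]
  -- reduce rdChoquet to interval integrals
  have hrdX : rdChoquet φ c X ω = (∫ x in Set.Ioc (-M) M, ψ (G x)) - M :=
    reduce_rd hM hfG hfG01 hfGz hfGo
  have hrdY : rdChoquet φ c Y ω = (∫ x in Set.Ioc (-M) M, ψ (H x)) - M :=
    reduce_rd hM hfH hfH01 hfHz hfHo
  rw [hrdX, hrdY]
  have hslint : ∀ t, (∫ x in Set.Ioc t M, G x) ≤ ∫ x in Set.Ioc t M, H x := by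
    intro t
    have h1 := choquet_pos_part c ⟨hc0, hc1, hcm⟩ X t M hGanti hG01 hGz
    have h2 := choquet_pos_part c ⟨hc0, hc1, hcm⟩ Y t M hHanti hH01 hHz
    have := hsl t
    rw [h1, h2] at this
    exact this
  have := core_main hGanti hHanti hG01 hH01 hψm hψc hψ0 hψrange hslint (a := -M)
  linarith
end Slope
end
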